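/- arXiv:0903.2992 — 6 statements merged into one kernel-verified Lean document; each statement's English description precedes it below -/
import Mathlib

section
/- Let i = i' i^s i'' be a sequence in Seq(ν) containing s ≥ 1 consecutive entries equal to i, starting at position r+1. If x_{r+1,i}^a = 0 in the cyclotomic quotient R_ν^Λ, then the symmetric combination Σ_{ℓ1+⋯+ℓs = a-(s-1)} x_{r+1,i}^{ℓ1} x_{r+2,i}^{ℓ2} ⋯ x_{r+s,i}^{ℓs} = 0 in R_ν^Λ. -/
namespace KLRPaper


/-- The sequence obtained from `i` by swapping the entries in positions `r` and `r+1`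
(0-indexed); identity if `r+1` is out of range. -/
def swapSeq {I : Type} {m : ℕ} (r : ℕ) (i : Fin m → I) : Fin m → I :=
  fun k =>
    if h : r + 1 < m then
      i (Equiv.swap (⟨r, Nat.lt_of_succ_lt h⟩ : Fin m) (⟨r + 1, h⟩ : Fin m) k)
    else i k

/-- The Khovanov–Lauda–Rouquier algebra of a simply-laced quiver with vertex set `I`
and adjacency relation `adj`, on `m` strands, presented by its generators
(idempotents `e i`, dots `x r i`, crossings `δ r i`) and the KLR relations. -/
structure KLR (I : Type) [DecidableEq I] (adj : I → I → Prop) (m : ℕ)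
    (A : Type) [Ring A] where
  e : (Fin m → I) → A
  x : Fin m → (Fin m → I) → A
  δ : ℕ → (Fin m → I) → A
  e_mul_e : ∀ i j, e i * e j = if i = j then e i else 0
  e_mul_x : ∀ r i, e i * x r i = x r i
  x_mul_e : ∀ r i, x r i * e i = x r i
  x_mul_x : ∀ r s i, x r i * x s i = x s i * x r i
  e_mul_δ : ∀ (r : ℕ) (i : Fin m → I), e (swapSeq r i) * δ r i = δ r i
  δ_mul_e : ∀ (r : ℕ) (i : Fin m → I), δ r i * e i = δ r i
  δδ_same : ∀ (r : ℕ) (h : r + 1 < m) (i : Fin m → I),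
    i ⟨r, Nat.lt_of_succ_lt h⟩ = i ⟨r + 1, h⟩ →
    δ r (swapSeq r i) * δ r i = 0
  δδ_orth : ∀ (r : ℕ) (h : r + 1 < m) (i : Fin m → I),
    i ⟨r, Nat.lt_of_succ_lt h⟩ ≠ i ⟨r + 1, h⟩ →
    ¬ adj (i ⟨r, Nat.lt_of_succ_lt h⟩) (i ⟨r + 1, h⟩) →
    δ r (swapSeq r i) * δ r i = e i
  δδ_adj : ∀ (r : ℕ) (h : r + 1 < m) (i : Fin m → I),
    adj (i ⟨r, Nat.lt_of_succ_lt h⟩) (i ⟨r + 1, h⟩) →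
    δ r (swapSeq r i) * δ r i = x ⟨r, Nat.lt_of_succ_lt h⟩ i + x ⟨r + 1, h⟩ i
  δx_far : ∀ (r : ℕ) (s : Fin m) (i : Fin m → I), s.val ≠ r → s.val ≠ r + 1 →
    δ r i * x s i = x s (swapSeq r i) * δ r i
  δx_diff1 : ∀ (r : ℕ) (h : r + 1 < m) (i : Fin m → I),
    i ⟨r, Nat.lt_of_succ_lt h⟩ ≠ i ⟨r + 1, h⟩ →
    δ r i * x ⟨r, Nat.lt_of_succ_lt h⟩ i = x ⟨r + 1, h⟩ (swapSeq r i) * δ r i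
  δx_diff2 : ∀ (r : ℕ) (h : r + 1 < m) (i : Fin m → I),
    i ⟨r, Nat.lt_of_succ_lt h⟩ ≠ i ⟨r + 1, h⟩ →
    δ r i * x ⟨r + 1, h⟩ i = x ⟨r, Nat.lt_of_succ_lt h⟩ (swapSeq r i) * δ r i
  δx_same1 : ∀ (r : ℕ) (h : r + 1 < m) (i : Fin m → I),
    i ⟨r, Nat.lt_of_succ_lt h⟩ = i ⟨r + 1, h⟩ →
    δ r i * x ⟨r, Nat.lt_of_succ_lt h⟩ i - x ⟨r + 1, h⟩ (swapSeq r i) * δ r i = e i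
  δx_same2 : ∀ (r : ℕ) (h : r + 1 < m) (i : Fin m → I),
    i ⟨r, Nat.lt_of_succ_lt h⟩ = i ⟨r + 1, h⟩ →
    x ⟨r, Nat.lt_of_succ_lt h⟩ (swapSeq r i) * δ r i - δ r i * x ⟨r + 1, h⟩ i = e i
  braid_easy : ∀ (r : ℕ) (h : r + 2 < m) (i : Fin m → I),
    ¬ (i ⟨r, by omega⟩ = i ⟨r + 2, h⟩ ∧ adj (i ⟨r, by omega⟩) (i ⟨r + 1, by omega⟩)) →
    δ r (swapSeq (r + 1) (swapSeq r i)) * δ (r + 1) (swapSeq r i) * δ r i =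
      δ (r + 1) (swapSeq r (swapSeq (r + 1) i)) * δ r (swapSeq (r + 1) i) * δ (r + 1) i
  braid_hard : ∀ (r : ℕ) (h : r + 2 < m) (i : Fin m → I),
    i ⟨r, by omega⟩ = i ⟨r + 2, h⟩ → adj (i ⟨r, by omega⟩) (i ⟨r + 1, by omega⟩) →
    δ r (swapSeq (r + 1) (swapSeq r i)) * δ (r + 1) (swapSeq r i) * δ r i -
      δ (r + 1) (swapSeq r (swapSeq (r + 1) i)) * δ r (swapSeq (r + 1) i) * δ (r + 1) i
      = e i

/-- The cyclotomic quotient `R_ν^Λ` of the KLR algebra at the dominant weight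
`Λ = Σ λ_i · i` (a finitely supported function `I →₀ ℕ`): it additionally satisfies
`x_{1,i}^{λ_{i₁}} 1_i = 0` for every sequence `i`. -/
structure CycKLR (I : Type) [DecidableEq I] (adj : I → I → Prop) (m : ℕ)
    (A : Type) [Ring A] (Λ : I →₀ ℕ) extends KLR I adj m A where
  cyc : ∀ (h : 0 < m) (i : Fin m → I), x ⟨0, h⟩ i ^ Λ (i ⟨0, h⟩) * e i = 0




private def Pp {A : Type} [Ring A] (X Y E : A) (n : ℕ) : A :=
  ∑ j ∈ Finset.range n, X ^ j * (Y ^ (n - 1 - j) * E)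

section Core

variable {A : Type} [Ring A] {E d X Y : A}

private lemma powE (hXE : X * E = X) (n : ℕ) : X ^ (n + 1) * E = X ^ (n + 1) := by
  rw [pow_succ, mul_assoc, hXE]

private lemma Epow (hEX : E * X = X) (n : ℕ) : E * X ^ (n + 1) = X ^ (n + 1) := by
  rw [pow_succ', ← mul_assoc, hEX]

private lemma EpowY (hEY : E * Y = Y) (hYE : Y * E = Y) (n : ℕ) :
    E * Y ^ n = Y ^ n * E := by
  cases n with
  | zero => simp
  | succ n => rw [Epow hEY, powE hYE]

/-- `(X^j * (Y^i * E)) * X = X^(j+1) * (Y^i * E)` -/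
private lemma tXE (hEX : E * X = X) (hXE : X * E = X) (hYE : Y * E = Y)
    (hXY : X * Y = Y * X) (j i : ℕ) :
    (X ^ j * (Y ^ i * E)) * X = X ^ (j + 1) * (Y ^ i * E) := by
  have hc : Commute X Y := hXY
  cases i with
  | zero =>
    simp only [pow_zero, one_mul]
    rw [mul_assoc, hEX, ← pow_succ, powE hXE]
  | succ i =>
    rw [powE hYE, mul_assoc, ((hc.symm).pow_left (i+1)).eq, ← mul_assoc, ← pow_succ]

private lemma PpE (hEE : E * E = E) (n : ℕ) : Pp X Y E n * E = Pp X Y E n := by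
  rw [Pp, Finset.sum_mul]
  refine Finset.sum_congr rfl fun j _ => ?_
  rw [mul_assoc, mul_assoc, hEE]

private lemma Ppd (hEd : E * d = d) (n : ℕ) :
    Pp X Y E n * d = ∑ j ∈ Finset.range n, X ^ j * (Y ^ (n - 1 - j) * d) := by
  rw [Pp, Finset.sum_mul]
  refine Finset.sum_congr rfl fun j _ => ?_
  rw [mul_assoc, mul_assoc, hEd]

/-- `Pp (n+1) = Pp n * X + Y^n * E` -/
private lemma Pp_succ_right (hEX : E * X = X) (hXE : X * E = X) (hYE : Y * E = Y)
    (hXY : X * Y = Y * X) (n : ℕ) :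
    Pp X Y E (n + 1) = Pp X Y E n * X + Y ^ n * E := by
  have : Pp X Y E (n + 1) = ∑ j ∈ Finset.range (n + 1), X ^ j * (Y ^ (n - j) * E) := rfl
  rw [this, Finset.sum_range_succ']
  simp only [pow_zero, one_mul]
  congr 1
  rw [Pp, Finset.sum_mul]
  refine Finset.sum_congr rfl fun j hj => ?_
  have hsub : n - (j + 1) = n - 1 - j := by omega
  rw [tXE hEX hXE hYE hXY, hsub]

/-- `Pp (n+1) = X * Pp n + E * Y^n` -/
private lemma Pp_succ_left (hEY : E * Y = Y) (hYE : Y * E = Y) (n : ℕ) :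
    Pp X Y E (n + 1) = X * Pp X Y E n + E * Y ^ n := by
  have : Pp X Y E (n + 1) = ∑ j ∈ Finset.range (n + 1), X ^ j * (Y ^ (n - j) * E) := rfl
  rw [this, Finset.sum_range_succ']
  simp only [pow_zero, one_mul]
  rw [EpowY hEY hYE]
  congr 1
  rw [Pp, Finset.mul_sum]
  refine Finset.sum_congr rfl fun j hj => ?_
  have hsub : n - (j + 1) = n - 1 - j := by omega
  simp only [hsub, pow_succ', mul_assoc]

/-- `Pp (n+1) * d = X * (Pp n * d) + Y^n * d` -/
private lemma Ppd_succ (hEd : E * d = d) (n : ℕ) :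
    Pp X Y E (n + 1) * d = X * (Pp X Y E n * d) + Y ^ n * d := by
  rw [Ppd hEd, Ppd hEd]
  have : ∑ j ∈ Finset.range (n + 1), X ^ j * (Y ^ (n + 1 - 1 - j) * d)
      = ∑ j ∈ Finset.range (n + 1), X ^ j * (Y ^ (n - j) * d) := rfl
  rw [this, Finset.sum_range_succ']
  simp only [pow_zero, one_mul]
  congr 1
  rw [Finset.mul_sum]
  refine Finset.sum_congr rfl fun j hj => ?_
  have hsub : n - (j + 1) = n - 1 - j := by omega
  simp only [hsub, pow_succ', mul_assoc]

/-- Lemma A: `d * X^n = Y^n * d + Pp n`. -/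
private lemma core1 (hEX : E * X = X) (hXE : X * E = X) (hYE : Y * E = Y)
    (hXY : X * Y = Y * X) (hdX : d * X = Y * d + E) (n : ℕ) :
    d * X ^ n = Y ^ n * d + Pp X Y E n := by
  induction n with
  | zero => simp [Pp]
  | succ n ih =>
    rw [pow_succ, ← mul_assoc, ih, add_mul, mul_assoc, hdX,
      Pp_succ_right hEX hXE hYE hXY]
    rw [mul_add, ← mul_assoc, ← pow_succ]
    ring_nf
    abel

/-- Lemma B: `X^n * d = d * Y^n + Pp n`. -/
private lemma core2 (hEY : E * Y = Y) (hYE : Y * E = Y)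
    (hXd : X * d = d * Y + E) (n : ℕ) :
    X ^ n * d = d * Y ^ n + Pp X Y E n := by
  induction n with
  | zero => simp [Pp]
  | succ n ih =>
    rw [pow_succ', mul_assoc, ih, mul_add, ← mul_assoc, hXd,
      Pp_succ_left hEY hYE]
    rw [add_mul, mul_assoc, ← pow_succ']
    abel

/-- The key identity: `Pp n = X^n d + d(X^n E) + d(Y X^n)d - d X^(n+1) d`. -/
private lemma core3 (hEE : E * E = E) (hEX : E * X = X) (hXE : X * E = X)
    (hEY : E * Y = Y) (hYE : Y * E = Y) (hXY : X * Y = Y * X)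
    (hdd : d * d = 0) (hEd : E * d = d) (hdE : d * E = d)
    (hdX : d * X = Y * d + E) (hXd : X * d = d * Y + E) (n : ℕ) :
    Pp X Y E n = X ^ n * d + d * (X ^ n * E) + d * (Y * X ^ n) * d
      - d * X ^ (n + 1) * d := by
  have hdY : d * Y = X * d - E := eq_sub_of_add_eq hXd.symm
  cases n with
  | zero =>
    simp only [Pp, Finset.range_zero, Finset.sum_empty, pow_zero, one_mul, mul_one, zero_add, pow_one]
    rw [hdE, hdY, sub_mul, mul_assoc, hdd, hdX, add_mul, mul_assoc, hdd, hEd]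
    simp
  | succ k =>
    have e1 : X ^ (k + 1) * d = d * Y ^ (k + 1) + Pp X Y E (k + 1) :=
      core2 hEY hYE hXd (k + 1)
    have e2 : d * (X ^ (k + 1) * E) = Y ^ (k + 1) * d + Pp X Y E (k + 1) := by
      rw [← mul_assoc, core1 hEX hXE hYE hXY hdX, add_mul, mul_assoc, hdE, PpE hEE]
    have e3 : d * (Y * X ^ (k + 1)) * d
        = X * (Pp X Y E (k + 1) * d) - X ^ (k + 1) * d := by
      rw [← mul_assoc d Y, hdY, sub_mul, mul_assoc X d, core1 hEX hXE hYE hXY hdX,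
        Epow hEX, mul_add, sub_mul, add_mul, mul_assoc X _ d, mul_assoc (Y ^ (k+1)) d d,
        hdd, mul_zero, mul_zero, zero_add, mul_assoc X _ d]
    have e4 : d * X ^ (k + 1 + 1) * d
        = X * (Pp X Y E (k + 1) * d) + Y ^ (k + 1) * d := by
      rw [core1 hEX hXE hYE hXY hdX, add_mul, mul_assoc, hdd, mul_zero, zero_add,
        Ppd_succ hEd]
    rw [e2, e3, e4, e1]
    abel

/-- core3 with a commuting "front" factor `F`, reorganized so every term on the
right contains `F * X^n * E` as a block. -/
private lemma core4 (hEE : E * E = E) (hEX : E * X = X) (hXE : X * E = X)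
    (hEY : E * Y = Y) (hYE : Y * E = Y) (hXY : X * Y = Y * X)
    (hdd : d * d = 0) (hEd : E * d = d) (hdE : d * E = d)
    (hdX : d * X = Y * d + E) (hXd : X * d = d * Y + E)
    (F : A) (hdF : d * F = F * d) (hXF : X * F = F * X) (hYF : Y * F = F * Y)
    (n : ℕ) :
    F * Pp X Y E n = (F * X ^ n * E) * d + d * (F * X ^ n * E)
      + d * (Y * ((F * X ^ n * E) * d)) - d * (X * ((F * X ^ n * E) * d)) := by
  have hZd : (F * X ^ n * E) * d = F * (X ^ n * d) := by
    rw [mul_assoc (F * X ^ n), hEd, mul_assoc]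
  have t2 : F * (d * (X ^ n * E)) = d * (F * X ^ n * E) := by
    rw [← mul_assoc, ← hdF, mul_assoc d F, ← mul_assoc F]
  have t3 : F * (d * (Y * X ^ n) * d) = d * (Y * ((F * X ^ n * E) * d)) := by
    rw [hZd, ← mul_assoc F, ← mul_assoc F d, ← hdF, mul_assoc d F, ← mul_assoc F Y,
      ← hYF, mul_assoc Y F, mul_assoc d, mul_assoc Y, mul_assoc F]
  have t4 : F * (d * X ^ (n + 1) * d) = d * (X * ((F * X ^ n * E) * d)) := by
    rw [hZd, pow_succ', ← mul_assoc F, ← mul_assoc F d, ← hdF, mul_assoc d F,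
      ← mul_assoc F X, ← hXF, mul_assoc X F, mul_assoc d, mul_assoc X, mul_assoc F]
  rw [core3 hEE hEX hXE hEY hYE hXY hdd hEd hdE hdX hXd n, mul_sub, mul_add, mul_add,
    t2, t3, t4, ← hZd]

end Core

/-- Swapping two equal entries leaves the sequence unchanged. -/
private lemma swapSeq_eq_self {I : Type} {m : ℕ} (p : ℕ) (q : Fin m → I)
    (h : p + 1 < m) (hq : q ⟨p, Nat.lt_of_succ_lt h⟩ = q ⟨p + 1, h⟩) :
    swapSeq p q = q := by
  funext k
  rw [swapSeq, dif_pos h]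
  by_cases h1 : k = (⟨p, Nat.lt_of_succ_lt h⟩ : Fin m)
  · subst h1; rw [Equiv.swap_apply_left, ← hq]
  · by_cases h2 : k = (⟨p + 1, h⟩ : Fin m)
    · subst h2; rw [Equiv.swap_apply_right, hq]
    · rw [Equiv.swap_apply_of_ne_of_ne h1 h2]


/-- Let `i = i' iˢ i''` contain `s ≥ 1` consecutive entries equal
to `c` starting at (1-indexed) position `r+1`.  If `x_{r+1,i}^a = 0` in the
cyclotomic quotient `R_ν^Λ`, then the symmetric combination
`Σ_{ℓ₁+⋯+ℓ_s = a-(s-1)} x_{r+1,i}^{ℓ₁} ⋯ x_{r+s,i}^{ℓ_s} = 0` in `R_ν^Λ`. -/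
theorem symmetric_combination_vanishes {I : Type} [DecidableEq I]
    {adj : I → I → Prop} {m : ℕ} {A : Type} [Ring A] {Λ : I →₀ ℕ}
    (K : CycKLR I adj m A Λ) (r s a : ℕ) (hs : 1 ≤ s) (hsa : s ≤ a + 1)
    (hrs : r + s ≤ m) (q : Fin m → I) (c : I)
    (hc : ∀ t : Fin s, q ⟨r + t.val, by have := t.isLt; omega⟩ = c)
    (ha : K.x ⟨r, by omega⟩ q ^ a * K.e q = 0) :
    (∑ ℓ ∈ Finset.Nat.antidiagonalTuple s (a + 1 - s),
        (List.ofFn fun t : Fin s =>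
          K.x ⟨r + t.val, by have := t.isLt; omega⟩ q ^ ℓ t).prod) * K.e q
      = 0 := by
  classical
  obtain ⟨u₀, rfl⟩ : ∃ u, s = u + 1 := ⟨s - 1, by omega⟩
  have claim : ∀ u, ∀ hu : u < u₀ + 1,
      (∑ ℓ ∈ Finset.Nat.antidiagonalTuple (u + 1) (a - u),
          (List.ofFn fun t : Fin (u + 1) =>
            K.x ⟨r + t.val, by have h1 := t.isLt; have h2 := hu; omega⟩ q ^ ℓ t).prod) * K.e q = 0 := by
    intro u
    induction u with
    | zero =>
      intro _
      rw [Finset.sum_mul]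
      refine Finset.sum_eq_zero fun ℓ hℓ => ?_
      rw [Finset.Nat.mem_antidiagonalTuple] at hℓ
      have hℓ0 : ℓ (Fin.last 0) = a := by
        rw [Fin.sum_univ_castSucc] at hℓ
        simpa using hℓ
      rw [List.ofFn_succ', List.prod_concat, hℓ0]
      simpa using ha
    | succ u ih =>
      intro hu
      have hIH := ih (by omega)
      rw [Finset.sum_mul] at hIH ⊢
      have hmlt : r + u + 1 < m := by omega
      have hqq : q ⟨r + u, Nat.lt_of_succ_lt hmlt⟩ = q ⟨r + u + 1, hmlt⟩ := by
        have h1 := hc ⟨u, by omega⟩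
        have h2 := hc ⟨u + 1, by omega⟩
        exact h1.trans h2.symm
      have hswap : swapSeq (r + u) q = q := swapSeq_eq_self (r + u) q hmlt hqq
      set X : A := K.x ⟨r + u, Nat.lt_of_succ_lt hmlt⟩ q with hXdef
      set Y : A := K.x ⟨r + u + 1, hmlt⟩ q with hYdef
      set d : A := K.δ (r + u) q with hddef
      set E : A := K.e q with hEdef
      have hEE : E * E = E := by rw [hEdef, K.e_mul_e, if_pos rfl]
      have hEX : E * X = X := K.e_mul_x _ q
      have hXE : X * E = X := K.x_mul_e _ q
      have hEY : E * Y = Y := K.e_mul_x _ q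
      have hYE : Y * E = Y := K.x_mul_e _ q
      have hXY : X * Y = Y * X := K.x_mul_x _ _ q
      have hdd : d * d = 0 := by
        have h := K.δδ_same (r + u) hmlt q hqq
        rwa [hswap] at h
      have hEd : E * d = d := by
        have h := K.e_mul_δ (r + u) q
        rwa [hswap] at h
      have hdE : d * E = d := K.δ_mul_e _ q
      have hdX : d * X = Y * d + E := by
        have h := K.δx_same1 (r + u) hmlt q hqq
        rw [hswap] at h
        exact sub_eq_iff_eq_add'.mp h
      have hXd : X * d = d * Y + E := by
        have h := K.δx_same2 (r + u) hmlt q hqq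
        rw [hswap] at h
        exact sub_eq_iff_eq_add'.mp h
      have hxd : ∀ t : Fin u, Commute d (K.x ⟨r + t.val, by have := t.isLt; omega⟩ q) := by
        intro t
        have h := K.δx_far (r + u) ⟨r + t.val, by have := t.isLt; omega⟩ q
          (by show r + t.val ≠ r + u; have := t.isLt; omega)
          (by show r + t.val ≠ r + u + 1; have := t.isLt; omega)
        rw [hswap] at h
        exact h
      have hdF : ∀ g : Fin u → ℕ,
          d * (List.ofFn fun t : Fin u =>
              K.x ⟨r + t.val, by have := t.isLt; omega⟩ q ^ g t).prod
            = (List.ofFn fun t : Fin u =>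
              K.x ⟨r + t.val, by have := t.isLt; omega⟩ q ^ g t).prod * d := by
        intro g
        refine (Commute.list_prod_right _ _ fun y hy => ?_).eq
        rw [List.mem_ofFn] at hy
        obtain ⟨t, rfl⟩ := hy
        exact (hxd t).pow_right (g t)
      have hXF : ∀ g : Fin u → ℕ,
          X * (List.ofFn fun t : Fin u =>
              K.x ⟨r + t.val, by have := t.isLt; omega⟩ q ^ g t).prod
            = (List.ofFn fun t : Fin u =>
              K.x ⟨r + t.val, by have := t.isLt; omega⟩ q ^ g t).prod * X := by
        intro g
        refine (Commute.list_prod_right _ _ fun y hy => ?_).eq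
        rw [List.mem_ofFn] at hy
        obtain ⟨t, rfl⟩ := hy
        have hcom : Commute X (K.x ⟨r + t.val, by have := t.isLt; omega⟩ q) :=
          K.x_mul_x _ _ q
        exact hcom.pow_right (g t)
      have hYF : ∀ g : Fin u → ℕ,
          Y * (List.ofFn fun t : Fin u =>
              K.x ⟨r + t.val, by have := t.isLt; omega⟩ q ^ g t).prod
            = (List.ofFn fun t : Fin u =>
              K.x ⟨r + t.val, by have := t.isLt; omega⟩ q ^ g t).prod * Y := by
        intro g
        refine (Commute.list_prod_right _ _ fun y hy => ?_).eq
        rw [List.mem_ofFn] at hy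
        obtain ⟨t, rfl⟩ := hy
        have hcom : Commute Y (K.x ⟨r + t.val, by have := t.isLt; omega⟩ q) :=
          K.x_mul_x _ _ q
        exact hcom.pow_right (g t)
      -- the previous-level sum, in peeled form
      have hS : (∑ ℓ ∈ Finset.Nat.antidiagonalTuple (u + 1) (a - u),
          (List.ofFn fun t : Fin u =>
              K.x ⟨r + t.val, by have := t.isLt; omega⟩ q ^ ℓ t.castSucc).prod
            * X ^ ℓ (Fin.last u)) * E = 0 := by
        rw [Finset.sum_mul, ← hIH]
        refine Finset.sum_congr rfl fun ℓ _ => ?_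
        rw [List.ofFn_succ', List.prod_concat]
        rfl
      -- reindex the target sum through the sigma set
      have hre : ∑ ℓ' ∈ Finset.Nat.antidiagonalTuple (u + 1 + 1) (a - (u + 1)),
          (List.ofFn fun t : Fin (u + 1 + 1) =>
            K.x ⟨r + t.val, by have := t.isLt; omega⟩ q ^ ℓ' t).prod * E
        = ∑ p ∈ (Finset.Nat.antidiagonalTuple (u + 1) (a - u)).sigma
              (fun ℓ => Finset.range (ℓ (Fin.last u))),
            (List.ofFn fun t : Fin u =>
              K.x ⟨r + t.val, by have := t.isLt; omega⟩ q ^ p.1 t.castSucc).prod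
              * (X ^ p.2 * (Y ^ (p.1 (Fin.last u) - 1 - p.2) * E)) := by
        refine Finset.sum_bij'
          (fun ℓ' _ => (⟨Fin.snoc (fun t : Fin u => ℓ' t.castSucc.castSucc)
              (ℓ' ((Fin.last u).castSucc) + ℓ' (Fin.last (u + 1)) + 1),
              ℓ' ((Fin.last u).castSucc)⟩ : Σ _ : Fin (u + 1) → ℕ, ℕ))
          (fun p _ => Fin.snoc (Fin.snoc (fun t : Fin u => p.1 t.castSucc) p.2)
              (p.1 (Fin.last u) - 1 - p.2))
          ?_ ?_ ?_ ?_ ?_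
        · intro ℓ' hℓ'
          simp only [Finset.Nat.mem_antidiagonalTuple, Fin.sum_univ_castSucc] at hℓ'
          simp only [Finset.mem_sigma, Finset.mem_range, Finset.Nat.mem_antidiagonalTuple,
            Fin.sum_univ_castSucc, Fin.snoc_castSucc, Fin.snoc_last]
          omega
        · intro p hp
          simp only [Finset.mem_sigma, Finset.mem_range,
            Finset.Nat.mem_antidiagonalTuple, Fin.sum_univ_castSucc] at hp
          simp only [Finset.Nat.mem_antidiagonalTuple, Fin.sum_univ_castSucc,
            Fin.snoc_castSucc, Fin.snoc_last]
          omega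
        · intro ℓ' hℓ'
          simp only [Fin.snoc_castSucc, Fin.snoc_last]
          have harith : ℓ' ((Fin.last u).castSucc) + ℓ' (Fin.last (u + 1)) + 1 - 1
              - ℓ' ((Fin.last u).castSucc) = ℓ' (Fin.last (u + 1)) := by omega
          rw [harith]
          have hinner : Fin.snoc (fun t : Fin u => ℓ' t.castSucc.castSucc)
              (ℓ' ((Fin.last u).castSucc)) = Fin.init ℓ' :=
            Fin.snoc_init_self (Fin.init ℓ')
          rw [hinner]
          exact Fin.snoc_init_self ℓ'
        · intro p hp
          obtain ⟨p1, p2⟩ := p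
          simp only [Finset.mem_sigma, Finset.mem_range,
            Finset.Nat.mem_antidiagonalTuple] at hp
          obtain ⟨-, hp2⟩ := hp
          simp only [Fin.snoc_castSucc, Fin.snoc_last]
          have harith : p2 + (p1 (Fin.last u) - 1 - p2) + 1 = p1 (Fin.last u) := by omega
          rw [harith]
          have h1 : Fin.snoc (fun t : Fin u => p1 t.castSucc) (p1 (Fin.last u)) = p1 :=
            Fin.snoc_init_self p1
          rw [h1]
        · intro ℓ' hℓ'
          simp only [Fin.snoc_castSucc, Fin.snoc_last]
          have harith : ℓ' ((Fin.last u).castSucc) + ℓ' (Fin.last (u + 1)) + 1 - 1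
              - ℓ' ((Fin.last u).castSucc) = ℓ' (Fin.last (u + 1)) := by omega
          rw [harith, List.ofFn_succ', List.prod_concat, List.ofFn_succ', List.prod_concat,
            mul_assoc, mul_assoc]
          rfl
      rw [hre]
      simp only [Finset.sum_sigma]
      have hPp : ∀ ℓ : Fin (u + 1) → ℕ,
          (∑ j ∈ Finset.range (ℓ (Fin.last u)),
            (List.ofFn fun t : Fin u =>
              K.x ⟨r + t.val, by have := t.isLt; omega⟩ q ^ ℓ t.castSucc).prod
              * (X ^ j * (Y ^ (ℓ (Fin.last u) - 1 - j) * E)))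
          = (List.ofFn fun t : Fin u =>
              K.x ⟨r + t.val, by have := t.isLt; omega⟩ q ^ ℓ t.castSucc).prod
              * Pp X Y E (ℓ (Fin.last u)) := by
        intro ℓ
        rw [Pp, Finset.mul_sum]
      refine Eq.trans (Finset.sum_congr rfl fun ℓ hℓ => (hPp ℓ).trans
        (core4 hEE hEX hXE hEY hYE hXY hdd hEd hdE hdX hXd _
          (hdF fun t => ℓ t.castSucc) (hXF fun t => ℓ t.castSucc)
          (hYF fun t => ℓ t.castSucc) (ℓ (Fin.last u)))) ?_
      rw [Finset.sum_sub_distrib, Finset.sum_add_distrib, Finset.sum_add_distrib]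
      simp only [← Finset.sum_mul, ← Finset.mul_sum]
      rw [hS]
      simp
  have h := claim u₀ (Nat.lt_succ_self u₀)
  have he : a + 1 - (u₀ + 1) = a - u₀ := by omega
  rw [he]
  exact h

end KLRPaper
end

section
/- Let i = i_1…i_m ∈ Seq(ν) with i_{m-1} = i_m. If x_{m-1,i}^b = 0 in R_ν^Λ, then x_{m,i}^b = 0 in R_ν^Λ. -/
namespace KLRPaper


/-- Auxiliary sequence: `Spow Y X E k` is `∑_{j<k} Y^j X^(k-1-j) E`, defined by
recursion. -/
def Spow {A : Type} [Ring A] (Y X E : A) : ℕ → A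
  | 0 => 0
  | k + 1 => Y * Spow Y X E k + X ^ k * E

/-- Abstract nilHecke-style computation: from `ψ² = 0`, `ψX = Yψ + E` and the
idempotent identities, `X^b E = 0` implies `Y^b E = 0`. -/
theorem spow_key {A : Type} [Ring A] (X Y E ψ : A)
    (hψψ : ψ * ψ = 0)
    (h1 : ψ * X = Y * ψ + E)
    (hXY : X * Y = Y * X)
    (hEX : E * X = X) (hXE : X * E = X) (hYE : Y * E = Y) (hEY : E * Y = Y)
    (hEE : E * E = E) (hψE : ψ * E = ψ)
    (b : ℕ) (hb : X ^ b * E = 0) : Y ^ b * E = 0 := by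
  have hc : ∀ k : ℕ, X ^ k * Y = Y * X ^ k := fun k =>
    ((show Commute X Y from hXY).pow_left k).eq
  have hEXk : ∀ k : ℕ, E * X ^ k = X ^ k * E := by
    intro k
    induction k with
    | zero => simp
    | succ n ih =>
      calc E * X ^ (n + 1) = (E * X) * X ^ n := by rw [pow_succ', mul_assoc]
        _ = X ^ (n + 1) := by rw [hEX, ← pow_succ']
        _ = X ^ (n + 1) * E := by rw [pow_succ, mul_assoc, hXE, ← pow_succ]
  have hXkEY : ∀ k : ℕ, X ^ k * E * Y = Y * (X ^ k * E) := by
    intro k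
    have h' : Y * (X ^ k * E) = X ^ k * Y := by
      rw [← mul_assoc, ← hc, mul_assoc, hYE]
    rw [mul_assoc, hEY, h']
  have lemA : ∀ k : ℕ, ψ * X ^ k = Y ^ k * ψ + Spow Y X E k := by
    intro k
    induction k with
    | zero => simp [Spow]
    | succ n ih =>
      calc ψ * X ^ (n + 1) = (ψ * X) * X ^ n := by rw [pow_succ', mul_assoc]
        _ = Y * (ψ * X ^ n) + E * X ^ n := by rw [h1, add_mul, mul_assoc]
        _ = Y * (Y ^ n * ψ) + (Y * Spow Y X E n + X ^ n * E) := by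
            rw [ih, mul_add, hEXk, add_assoc]
        _ = Y ^ (n + 1) * ψ + Spow Y X E (n + 1) := by
            rw [pow_succ', mul_assoc, Spow]
  have lemD : ∀ k : ℕ, Spow Y X E k * E = Spow Y X E k := by
    intro k
    induction k with
    | zero => simp [Spow]
    | succ n ih =>
      show (Y * Spow Y X E n + X ^ n * E) * E = _
      rw [add_mul, mul_assoc, ih, mul_assoc, hEE, Spow]
  have lemComm : ∀ k : ℕ, Spow Y X E k * Y = Y * Spow Y X E k := by
    intro k
    induction k with
    | zero => simp [Spow]
    | succ n ih =>
      show (Y * Spow Y X E n + X ^ n * E) * Y = Y * (Y * Spow Y X E n + X ^ n * E)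
      rw [add_mul, mul_assoc, ih, hXkEY, mul_add]
  have lemC : ∀ k : ℕ, X ^ k * E - Y ^ k * E = (X - Y) * Spow Y X E k := by
    intro k
    induction k with
    | zero => simp [Spow]
    | succ n ih =>
      have step : (X - Y) * Spow Y X E (n + 1)
          = Y * ((X - Y) * Spow Y X E n) + ((X - Y) * (X ^ n * E)) := by
        show (X - Y) * (Y * Spow Y X E n + X ^ n * E) = _
        rw [mul_add, ← mul_assoc, sub_mul, hXY, ← mul_sub, mul_assoc]
      rw [step, ← ih, mul_sub]
      have e1 : (X - Y) * (X ^ n * E) = X ^ (n + 1) * E - Y * (X ^ n * E) := by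
        rw [sub_mul, pow_succ', mul_assoc]
      rw [e1]
      have e2 : Y * (Y ^ n * E) = Y ^ (n + 1) * E := by
        rw [pow_succ', mul_assoc]
      rw [e2]
      abel
  have h5 : Y ^ b * ψ + Spow Y X E b = 0 := by
    have h0 : ψ * X ^ b * E = 0 := by rw [mul_assoc, hb, mul_zero]
    rw [lemA b, add_mul, mul_assoc, hψE, lemD] at h0
    exact h0
  have hSψ : Spow Y X E b * ψ = 0 := by
    have h0 : (Y ^ b * ψ + Spow Y X E b) * ψ = 0 := by rw [h5, zero_mul]
    rw [add_mul, mul_assoc, hψψ, mul_zero, zero_add] at h0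
    exact h0
  have hS0 : Spow Y X E b = 0 := by
    have h6 : Spow Y X E b * (ψ * X) = 0 := by rw [← mul_assoc, hSψ, zero_mul]
    rw [h1, mul_add, lemD, ← mul_assoc, lemComm, mul_assoc, hSψ, mul_zero,
      zero_add] at h6
    exact h6
  have h7 := lemC b
  rw [hS0, mul_zero, hb, zero_sub, neg_eq_zero] at h7
  exact h7

/-- Let `i = i₁…i_m` with `i_{m-1} = i_m`.  If `x_{m-1,i}^b = 0`
in `R_ν^Λ`, then `x_{m,i}^b = 0` in `R_ν^Λ`. -/
theorem nilpotency_propagates_to_last_strand {I : Type} [DecidableEq I]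
    {adj : I → I → Prop} {m : ℕ} {A : Type} [Ring A] {Λ : I →₀ ℕ}
    (K : CycKLR I adj m A Λ) (hm : 2 ≤ m) (q : Fin m → I)
    (heq : q ⟨m - 2, by omega⟩ = q ⟨m - 1, by omega⟩) (b : ℕ)
    (hb : K.x ⟨m - 2, by omega⟩ q ^ b * K.e q = 0) :
    K.x ⟨m - 1, by omega⟩ q ^ b * K.e q = 0 := by
  have hlt : (m - 2) + 1 < m := by omega
  have hc : (⟨m - 1, by omega⟩ : Fin m) = ⟨(m - 2) + 1, hlt⟩ := by
    apply Fin.ext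
    show m - 1 = m - 2 + 1
    omega
  rw [hc] at heq ⊢
  have heq' : q ⟨m - 2, Nat.lt_of_succ_lt hlt⟩ = q ⟨(m - 2) + 1, hlt⟩ := heq
  have hswap : swapSeq (m - 2) q = q := by
    funext k
    unfold swapSeq
    rw [dif_pos hlt]
    rcases eq_or_ne k ⟨m - 2, Nat.lt_of_succ_lt hlt⟩ with hk | hk
    · subst hk; rw [Equiv.swap_apply_left]; exact heq'.symm
    rcases eq_or_ne k ⟨(m - 2) + 1, hlt⟩ with hk2 | hk2
    · subst hk2; rw [Equiv.swap_apply_right]; exact heq'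
    · rw [Equiv.swap_apply_of_ne_of_ne hk hk2]
  set a : Fin m := ⟨m - 2, Nat.lt_of_succ_lt hlt⟩ with ha
  set c : Fin m := ⟨(m - 2) + 1, hlt⟩ with hcdef
  have hψψ : K.δ (m - 2) q * K.δ (m - 2) q = 0 := by
    have := K.δδ_same (m - 2) hlt q heq'
    rwa [hswap] at this
  have h1 : K.δ (m - 2) q * K.x a q = K.x c q * K.δ (m - 2) q + K.e q := by
    have := K.δx_same1 (m - 2) hlt q heq'
    rw [hswap] at this
    exact sub_eq_iff_eq_add'.mp this
  have hEE : K.e q * K.e q = K.e q := by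
    rw [K.e_mul_e q q, if_pos rfl]
  have hψE : K.δ (m - 2) q * K.e q = K.δ (m - 2) q := K.δ_mul_e (m - 2) q
  exact spow_key (K.x a q) (K.x c q) (K.e q) (K.δ (m - 2) q) hψψ h1
    (K.x_mul_x a c q) (K.e_mul_x a q) (K.x_mul_e a q) (K.x_mul_e c q)
    (K.e_mul_x c q) hEE hψE b hb

end KLRPaper
end

section
/- For the quiver of type A_∞ with vertex set ℤ, a stable antigravity configuration is exactly an antigravity configuration having precisely one bead on runner i for each i in some integer interval [a,b] containing the anchored bead. -/
namespace KLRPaper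


/-- Adjacency for the type `A_∞` quiver with vertex set `ℤ`. -/
def adjZ (u v : ℤ) : Prop := (u - v).natAbs = 1

/-- The heap covering relation for the bead-and-runner diagram of the sequence `l`
(type `A_∞`): bead `a` is directly below bead `b` if it was placed earlier and its
runner is at distance at most one from the runner of `b`. -/
def HeapRel (l : List ℤ) (a b : ℕ) : Prop :=
  a < b ∧ b < l.length ∧ (l.getD a 0 - l.getD b 0).natAbs ≤ 1

/-- Bead `k` is trapped below the anchored bead `r` in antigravity: there is a chain
of beads from `k` up to `r`, each step going to a later bead on the same or an
adjacent runner. -/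
def Trapped (l : List ℤ) (r k : ℕ) : Prop :=
  Relation.ReflTransGen (HeapRel l) k r

open Classical in
/-- The support of the `r`-stable antigravity configuration `a_r(l)`: the set of
runners carrying a bead trapped below the anchored bead `r`. -/
noncomputable def trappedRunners (l : List ℤ) (r : ℕ) : Finset ℤ :=
  ((Finset.range l.length).filter fun k => Trapped l r k).image fun k => l.getD k 0

/-- The `r`-antigravity bound `b_r = Σ_{j ∈ Supp(a_r(l))} λ_j`. -/
noncomputable def agBound (Λ : ℤ →₀ ℕ) (l : List ℤ) (r : ℕ) : ℕ :=
  ∑ j ∈ trappedRunners l r, Λ j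


/-- The whole configuration is stable under antigravity with anchored bead `r`:
every bead is trapped below the anchor. -/
def AGStable (l : List ℤ) (r : ℕ) : Prop :=
  r < l.length ∧ ∀ k < l.length, Trapped l r k

/-- A stack move is applicable: two beads on the same runner with no bead on the
same or an adjacent runner between them. -/
def StackApplicable (l : List ℤ) : Prop :=
  ∃ a d, a < d ∧ d < l.length ∧ l.getD a 0 = l.getD d 0 ∧
    ∀ k, a < k → k < d → 2 ≤ (l.getD k 0 - l.getD a 0).natAbs

/-- A square move is applicable: the anchored bead `r` is the top of a square
configuration, whose bottom bead `d` is on the same runner and whose two middle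
beads `a, b` sit on the two adjacent runners, with nothing else nearby in
between. -/
def SquareApplicable (l : List ℤ) (r : ℕ) : Prop :=
  ∃ d a b, d < a ∧ d < b ∧ a < r ∧ b < r ∧ a ≠ b ∧
    l.getD d 0 = l.getD r 0 ∧
    l.getD a 0 = l.getD r 0 - 1 ∧ l.getD b 0 = l.getD r 0 + 1 ∧
    ∀ k, d < k → k < r → k ≠ a → k ≠ b → 2 ≤ (l.getD k 0 - l.getD r 0).natAbs

/-- An `L`-move is applicable: two beads `d < c` on the same runner with exactly
one bead `b` on an adjacent runner wedged between them and nothing else nearby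
in between. -/
def LApplicable (l : List ℤ) : Prop :=
  ∃ d b c, d < b ∧ b < c ∧ c < l.length ∧ l.getD d 0 = l.getD c 0 ∧
    (l.getD b 0 - l.getD d 0).natAbs = 1 ∧
    ∀ k, d < k → k < c → k ≠ b → 2 ≤ (l.getD k 0 - l.getD d 0).natAbs

lemma mem_of_between (l : List ℤ) (r : ℕ) (hr : r < l.length) :
    ∀ k : ℕ, Trapped l r k → ∀ j : ℤ,
      (l.getD k 0 ≤ j ∧ j ≤ l.getD r 0) ∨ (l.getD r 0 ≤ j ∧ j ≤ l.getD k 0) → j ∈ l := by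
  intro k hk
  induction hk using Relation.ReflTransGen.head_induction_on with
  | refl =>
    intro j hj
    have hjr : j = l.getD r 0 := by omega
    subst hjr
    rw [List.getD_eq_getElem l 0 hr]
    exact List.getElem_mem hr
  | head hac hcr ih =>
    rename_i a c
    intro j hj
    obtain ⟨hlt, hcN, hdist⟩ := hac
    by_cases hcase : (l.getD c 0 ≤ j ∧ j ≤ l.getD r 0) ∨ (l.getD r 0 ≤ j ∧ j ≤ l.getD c 0)
    · exact ih j hcase
    · have haj : j = l.getD a 0 := by omega
      subst haj
      have haN : a < l.length := lt_trans hlt hcN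
      rw [List.getD_eq_getElem l 0 haN]
      exact List.getElem_mem haN

open Classical in
lemma nodup_of_stable (l : List ℤ) (r : ℕ) (hstab : AGStable l r)
    (hsq : ¬ SquareApplicable l r) (hst : ¬ StackApplicable l) (hL : ¬ LApplicable l) :
    l.Nodup := by
  by_contra hnd
  -- extract a duplicate pair
  have hdup : ∃ i j : ℕ, i < j ∧ j < l.length ∧ l.getD i 0 = l.getD j 0 := by
    by_contra h
    push_neg at h
    apply hnd
    rw [List.nodup_iff_injective_get]
    intro i j hij
    by_contra hne
    rcases lt_or_gt_of_ne (fun hv : (i:ℕ) = j => hne (Fin.ext hv)) with hlt | hlt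
    · exact absurd hij (by
        have := h i j hlt j.isLt
        simpa [List.getD_eq_getElem l 0 i.isLt, List.getD_eq_getElem l 0 j.isLt,
          List.get_eq_getElem] using this)
    · exact absurd hij.symm (by
        have := h j i hlt i.isLt
        simpa [List.getD_eq_getElem l 0 i.isLt, List.getD_eq_getElem l 0 j.isLt,
          List.get_eq_getElem] using this)
  -- the set of left ends of duplicate pairs, take the maximal one
  set P : ℕ → Prop := fun p => ∃ q, p < q ∧ q < l.length ∧ l.getD p 0 = l.getD q 0 with hP
  obtain ⟨i, j, hij, hjN, hval⟩ := hdup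
  have hiP : P i := ⟨j, hij, hjN, hval⟩
  set s : Finset ℕ := (Finset.range l.length).filter P with hs
  have hism : i ∈ s := by
    simp only [hs, Finset.mem_filter, Finset.mem_range]
    exact ⟨lt_trans hij hjN, hiP⟩
  set p : ℕ := s.max' ⟨i, hism⟩ with hpdef
  have hpP : P p := by
    have := s.max'_mem ⟨i, hism⟩
    exact (Finset.mem_filter.mp this).2
  have hpmax : ∀ x, P x → x < l.length → x ≤ p := by
    intro x hx hxN
    apply Finset.le_max'
    rw [hs, Finset.mem_filter, Finset.mem_range]
    exact ⟨hxN, hx⟩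
  -- key consequence: no duplicate pair strictly above p
  have hkey : ∀ k1 k2 : ℕ, p < k1 → k1 < k2 → k2 < l.length →
      l.getD k1 0 = l.getD k2 0 → False := by
    intro k1 k2 h1 h2 h3 h4
    have : k1 ≤ p := hpmax k1 ⟨k2, h2, h3, h4⟩ (lt_trans h2 h3)
    omega
  -- minimal partner q
  set Q : ℕ → Prop := fun q => p < q ∧ q < l.length ∧ l.getD p 0 = l.getD q 0 with hQ
  have hQex : ∃ q, Q q := hpP
  set q : ℕ := Nat.find hQex with hqdef
  obtain ⟨hpq, hqN, hpqval⟩ : Q q := Nat.find_spec hQex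
  have hqmin : ∀ m, m < q → ¬ Q m := fun m hm => Nat.find_min hQex hm
  set v : ℤ := l.getD p 0 with hv
  have hq_ne : ∀ k, p < k → k < q → l.getD k 0 ≠ v := by
    intro k h1 h2 heq
    exact hqmin k h2 ⟨h1, lt_trans h2 hqN, heq.symm⟩
  -- uniqueness of values strictly between p and q at the two adjacent runners
  have huniq : ∀ k1 k2, p < k1 → p < k2 → k1 < q → k2 < q → k1 ≠ k2 →
      l.getD k1 0 = l.getD k2 0 → False := by
    intro k1 k2 h1 h2 h3 h4 hne heq
    rcases lt_or_gt_of_ne hne with h | h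
    · exact hkey k1 k2 h1 h (lt_trans h4 hqN) heq
    · exact hkey k2 k1 h2 h (lt_trans h3 hqN) heq.symm
  by_cases hA : ∃ a, p < a ∧ a < q ∧ l.getD a 0 = v - 1
  · by_cases hB : ∃ b, p < b ∧ b < q ∧ l.getD b 0 = v + 1
    · obtain ⟨a, hpa, haq, hav⟩ := hA
      obtain ⟨b, hpb, hbq, hbv⟩ := hB
      have hab : a ≠ b := by intro h; rw [h, hbv] at hav; omega
      by_cases hqr : q = r
      · subst hqr
        apply hsq
        refine ⟨p, a, b, hpa, hpb, haq, hbq, hab, hpqval, ?_, ?_, ?_⟩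
        · rw [← hpqval]; exact hav
        · rw [← hpqval]; exact hbv
        · intro k hk1 hk2 hka hkb
          rw [← hpqval]
          by_contra hcon
          have hcon' : (l.getD k 0 - v).natAbs ≤ 1 := by omega
          have h3 : l.getD k 0 = v - 1 ∨ l.getD k 0 = v ∨ l.getD k 0 = v + 1 := by omega
          rcases h3 with h3 | h3 | h3
          · exact huniq k a hk1 hpa hk2 haq hka (by rw [h3, hav])
          · exact hq_ne k hk1 hk2 h3
          · exact huniq k b hk1 hpb hk2 hbq hkb (by rw [h3, hbv])
      · -- q ≠ r : q has a bead above it on a nearby runner; contradiction with maximality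
        have htr : Trapped l r q := hstab.2 q hqN
        rcases (Relation.ReflTransGen.cases_head htr) with heq | ⟨c, hqc, _⟩
        · exact hqr heq
        · obtain ⟨hqc1, hcN, hdist⟩ := hqc
          have hqv : l.getD q 0 = v := hpqval.symm
          have h3 : l.getD c 0 = v - 1 ∨ l.getD c 0 = v ∨ l.getD c 0 = v + 1 := by omega
          rcases h3 with h3 | h3 | h3
          · exact hkey a c hpa (lt_trans haq hqc1) hcN (by rw [hav, h3])
          · exact hkey q c hpq hqc1 hcN (by rw [hqv, h3])
          · exact hkey b c hpb (lt_trans hbq hqc1) hcN (by rw [hbv, h3])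
    · -- only a lower neighbour (or analysis): L-move with middle a
      obtain ⟨a, hpa, haq, hav⟩ := hA
      apply hL
      refine ⟨p, a, q, hpa, haq, hqN, hpqval, by rw [hav, ← hv]; omega, ?_⟩
      intro k hk1 hk2 hka
      by_contra hcon
      have h3 : l.getD k 0 = v - 1 ∨ l.getD k 0 = v ∨ l.getD k 0 = v + 1 := by omega
      rcases h3 with h3 | h3 | h3
      · exact huniq k a hk1 hpa hk2 haq hka (by rw [h3, hav])
      · exact hq_ne k hk1 hk2 h3
      · exact hB ⟨k, hk1, hk2, h3⟩
  · by_cases hB : ∃ b, p < b ∧ b < q ∧ l.getD b 0 = v + 1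
    · obtain ⟨b, hpb, hbq, hbv⟩ := hB
      apply hL
      refine ⟨p, b, q, hpb, hbq, hqN, hpqval, by rw [hbv, ← hv]; omega, ?_⟩
      intro k hk1 hk2 hkb
      by_contra hcon
      have h3 : l.getD k 0 = v - 1 ∨ l.getD k 0 = v ∨ l.getD k 0 = v + 1 := by omega
      rcases h3 with h3 | h3 | h3
      · exact hA ⟨k, hk1, hk2, h3⟩
      · exact hq_ne k hk1 hk2 h3
      · exact huniq k b hk1 hpb hk2 hbq hkb (by rw [h3, hbv])
    · apply hst
      refine ⟨p, q, hpq, hqN, hpqval, ?_⟩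
      intro k hk1 hk2
      by_contra hcon
      have h3 : l.getD k 0 = v - 1 ∨ l.getD k 0 = v ∨ l.getD k 0 = v + 1 := by omega
      rcases h3 with h3 | h3 | h3
      · exact hA ⟨k, hk1, hk2, h3⟩
      · exact hq_ne k hk1 hk2 h3
      · exact hB ⟨k, hk1, hk2, h3⟩

/-- For the type `A_∞` quiver with vertex set `ℤ`, a stable
antigravity configuration is exactly an antigravity configuration having
precisely one bead on runner `j` for each `j` in an integer interval `[a,b]`
containing the anchored bead. -/
theorem stable_antigravity_configuration_iff_interval
    (l : List ℤ) (r : ℕ) (hstab : AGStable l r) :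
    (¬ SquareApplicable l r ∧ ¬ StackApplicable l ∧ ¬ LApplicable l) ↔
      (l.Nodup ∧ ∃ a b : ℤ, a ≤ l.getD r 0 ∧ l.getD r 0 ≤ b ∧
        ∀ j : ℤ, j ∈ l ↔ a ≤ j ∧ j ≤ b) := by
  constructor
  · rintro ⟨hsq, hst, hL⟩
    have hnd := nodup_of_stable l r hstab hsq hst hL
    refine ⟨hnd, ?_⟩
    have hrN := hstab.1
    have hne : l.toFinset.Nonempty := by
      rw [List.toFinset_nonempty_iff]
      exact List.ne_nil_of_length_pos (lt_of_le_of_lt (Nat.zero_le r) hrN)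
    have hrmem : l.getD r 0 ∈ l.toFinset := by
      rw [List.mem_toFinset, List.getD_eq_getElem l 0 hrN]
      exact List.getElem_mem hrN
    refine ⟨l.toFinset.min' hne, l.toFinset.max' hne,
      Finset.min'_le _ _ hrmem, Finset.le_max' _ _ hrmem, ?_⟩
    intro j
    constructor
    · intro hj
      exact ⟨Finset.min'_le _ _ (List.mem_toFinset.mpr hj),
        Finset.le_max' _ _ (List.mem_toFinset.mpr hj)⟩
    · rintro ⟨h1, h2⟩
      rcases le_total j (l.getD r 0) with hc | hc
      · have hamem : l.toFinset.min' hne ∈ l := List.mem_toFinset.mp (Finset.min'_mem _ _)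
        obtain ⟨ka, hkaN, hka⟩ := List.mem_iff_getElem.mp hamem
        have hka' : l.getD ka 0 = l.toFinset.min' hne := by
          rw [List.getD_eq_getElem l 0 hkaN]; exact hka
        exact mem_of_between l r hrN ka (hstab.2 ka hkaN) j (Or.inl ⟨hka' ▸ h1, hc⟩)
      · have hbmem : l.toFinset.max' hne ∈ l := List.mem_toFinset.mp (Finset.max'_mem _ _)
        obtain ⟨kb, hkbN, hkb⟩ := List.mem_iff_getElem.mp hbmem
        have hkb' : l.getD kb 0 = l.toFinset.max' hne := by
          rw [List.getD_eq_getElem l 0 hkbN]; exact hkb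
        exact mem_of_between l r hrN kb (hstab.2 kb hkbN) j (Or.inr ⟨hc, hkb' ▸ h2⟩)
  · rintro ⟨hnd, -⟩
    have inj : ∀ i j : ℕ, i < j → j < l.length → l.getD i 0 = l.getD j 0 → False := by
      intro i j hij hjN heq
      rw [List.getD_eq_getElem l 0 (lt_trans hij hjN), List.getD_eq_getElem l 0 hjN] at heq
      have := (List.Nodup.getElem_inj_iff hnd).mp heq
      omega
    refine ⟨?_, ?_, ?_⟩
    · rintro ⟨d, a, b, h1, h2, h3, h4, h5, h6, -⟩
      exact inj d r (lt_trans h1 h3) hstab.1 h6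
    · rintro ⟨a, d, h1, h2, h3, -⟩
      exact inj a d h1 h2 h3
    · rintro ⟨d, b, c, h1, h2, h3, h4, -⟩
      exact inj d c (lt_trans h1 h2) h3 h4

end KLRPaper
end

section
/- Two sequences i, j ∈ Seq(ν) lie in the same connected component of the weight graph G_ν if and only if conf(i) = conf(j); moreover i ↦ T^i and T ↦ i^T are mutually inverse bijections between standard λ-tableaux and sequences i with conf(i) = λ. -/
namespace KLRPaper

/-- The height at which a bead dropped on runner `j` comes to rest, given the
beads already placed (gravity: it rests one above the highest bead on the same
or an adjacent runner). -/
def heightIn (acc : List (ℤ × ℕ)) (j : ℤ) : ℕ :=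
  (acc.filterMap fun p =>
    if (p.1 - j).natAbs ≤ 1 then some (p.2 + 1) else none).foldr max 0

/-- Drop the beads of the sequence one by one onto the abacus, recording the cell
(runner, height) of each bead in order. -/
def cellsAux : List (ℤ × ℕ) → List ℤ → List (ℤ × ℕ)
  | acc, [] => acc
  | acc, j :: rest => cellsAux (acc ++ [(j, heightIn acc j)]) rest

/-- The list of cells of the beads of the sequence `l`, in the order in which
they are dropped; this is the standard `λ`-tableau `T^l`. -/
def cells (l : List ℤ) : List (ℤ × ℕ) := cellsAux [] l

/-- The configuration `conf(l)` of the sequence `l`: the (unlabelled) set of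
occupied cells of the bead-and-runner diagram. -/
def conf (l : List ℤ) : Multiset (ℤ × ℕ) := (cells l : Multiset (ℤ × ℕ))

/-- An admissible transposition: swap two neighbouring entries of the sequence
whose runners are distinct and non-adjacent (`i_r · i_{r+1} = 0`); this is the
edge relation of the weight graph `G_ν`. -/
def AdmSwap (l l' : List ℤ) : Prop :=
  ∃ r, r + 1 < l.length ∧ 2 ≤ (l.getD r 0 - l.getD (r + 1) 0).natAbs ∧
    l' = (l.set r (l.getD (r + 1) 0)).set (r + 1) (l.getD r 0)

/-- A standard `λ`-tableau for the configuration `c`: a numbering of the beads of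
`c` (a list of cells) such that beads may be placed in increasing order of their
labels, each coming to rest in its own cell. -/
def IsStandardTableau (c : Multiset (ℤ × ℕ)) (t : List (ℤ × ℕ)) : Prop :=
  (t : Multiset (ℤ × ℕ)) = c ∧ t = cells (t.map Prod.fst)

/-!
Dropping a bead only affects the beads on its own and the two neighbouring runners, so
two consecutive beads on non-adjacent runners can be dropped in either order: admissible
transpositions preserve the configuration. Conversely, let `j` be the last entry of `l`,
resting in the cell `(j, h)`. In any `l'` with the same configuration this cell is
occupied by some bead `j`, and every later bead of `l'` lies on a runner far from `j`
(otherwise it would rest above height `h`, which is the top of the neighbourhood of `j`).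
That bead can thus be moved to the end of `l'` by admissible transpositions, after which
removing the last bead from both sequences reduces to a shorter pair.
-/

lemma heightIn_le_iff {acc : List (ℤ × ℕ)} {j : ℤ} {n : ℕ} :
    heightIn acc j ≤ n ↔ ∀ x ∈ acc, (x.1 - j).natAbs ≤ 1 → x.2 < n := by
  unfold heightIn
  constructor
  · intro h x hx hadj
    exact lt_of_lt_of_le (List.le_max_of_le' 0 (List.mem_filterMap.2 ⟨x, hx, if_pos hadj⟩)
      le_rfl) h
  · intro h
    refine List.max_le_of_forall_le _ _ fun y hy => ?_
    obtain ⟨x, hx, hxy⟩ := List.mem_filterMap.1 hy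
    split_ifs at hxy with hadj
    cases hxy
    exact h x hx hadj

lemma lt_heightIn_of_mem {acc : List (ℤ × ℕ)} {j : ℤ} {x : ℤ × ℕ} (hx : x ∈ acc)
    (hadj : (x.1 - j).natAbs ≤ 1) : x.2 < heightIn acc j :=
  not_le.1 fun h => lt_irrefl _ (heightIn_le_iff.1 h x hx hadj)

lemma heightIn_perm {acc acc' : List (ℤ × ℕ)} (h : acc.Perm acc') (j : ℤ) :
    heightIn acc j = heightIn acc' j :=
  (h.filterMap _).foldr_eq 0

lemma heightIn_append_singleton_of_far (acc : List (ℤ × ℕ)) {b j : ℤ} (hb : ℕ)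
    (hfar : 2 ≤ (b - j).natAbs) :
    heightIn (acc ++ [(b, hb)]) j = heightIn acc j := by
  have hnear : ¬ (b - j).natAbs ≤ 1 := by omega
  simp [heightIn, List.filterMap_append, hnear]

lemma heightIn_append_singleton_self (acc : List (ℤ × ℕ)) (j : ℤ) :
    heightIn (acc ++ [(j, heightIn acc j)]) j = heightIn acc j + 1 := by
  refine le_antisymm (heightIn_le_iff.2 fun x hx hadj => ?_)
    (lt_heightIn_of_mem (x := (j, heightIn acc j)) (by simp) (by simp))
  rcases List.mem_append.1 hx with hx | hx
  · exact Nat.lt_succ_of_lt (lt_heightIn_of_mem hx hadj)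
  · rw [List.mem_singleton.1 hx]
    exact Nat.lt_succ_self _

lemma cellsAux_append : ∀ (acc : List (ℤ × ℕ)) (l₁ l₂ : List ℤ),
    cellsAux acc (l₁ ++ l₂) = cellsAux (cellsAux acc l₁) l₂
  | _, [], _ => rfl
  | acc, j :: l₁, l₂ => cellsAux_append (acc ++ [(j, heightIn acc j)]) l₁ l₂

lemma prefix_cellsAux : ∀ (acc : List (ℤ × ℕ)) (l : List ℤ), acc <+: cellsAux acc l
  | _, [] => List.prefix_refl _
  | _, _ :: l => (List.prefix_append _ _).trans (prefix_cellsAux _ l)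

lemma cellsAux_perm : ∀ (l : List ℤ) {acc acc' : List (ℤ × ℕ)},
    acc.Perm acc' → (cellsAux acc l).Perm (cellsAux acc' l)
  | [], _, _, h => h
  | j :: l, _, _, h => by
    simp only [cellsAux, heightIn_perm h j]
    exact cellsAux_perm l (h.append_right _)

lemma cells_append (l₁ l₂ : List ℤ) : cells (l₁ ++ l₂) = cellsAux (cells l₁) l₂ :=
  cellsAux_append [] l₁ l₂

lemma cells_append_singleton (l : List ℤ) (j : ℤ) :
    cells (l ++ [j]) = cells l ++ [(j, heightIn (cells l) j)] :=
  cells_append l [j]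

lemma cells_prefix_cells_append (l₁ l₂ : List ℤ) : cells l₁ <+: cells (l₁ ++ l₂) := by
  rw [cells_append]
  exact prefix_cellsAux _ _

lemma map_fst_cells (l : List ℤ) : (cells l).map Prod.fst = l := by
  induction l using List.reverseRecOn with
  | nil => rfl
  | append_singleton l j ih => simp [cells_append_singleton, ih]

lemma eq_nil_of_conf_eq_zero {l : List ℤ} (h : conf l = 0) : l = [] := by
  rw [← map_fst_cells l, (Multiset.coe_eq_zero _).1 h, List.map_nil]

lemma conf_append_singleton (l : List ℤ) (j : ℤ) :
    conf (l ++ [j]) = (j, heightIn (cells l) j) ::ₘ conf l := by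
  rw [conf, cells_append_singleton, conf, Multiset.cons_coe]
  exact Multiset.coe_eq_coe.2 (List.perm_append_singleton _ _)

lemma heightIn_cells_eq_of_conf_eq {l l' : List ℤ} (h : conf l = conf l') (j : ℤ) :
    heightIn (cells l) j = heightIn (cells l') j :=
  heightIn_perm (Multiset.coe_eq_coe.1 h) j

lemma conf_eq_of_conf_append_singleton_eq {l l' : List ℤ} {j : ℤ}
    (h : conf (l ++ [j]) = conf (l' ++ [j])) : conf l = conf l' := by
  have hheight : heightIn (cells l) j = heightIn (cells l') j := by
    have := heightIn_cells_eq_of_conf_eq h j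
    rw [cells_append_singleton, cells_append_singleton, heightIn_append_singleton_self,
      heightIn_append_singleton_self] at this
    omega
  rwa [conf_append_singleton, conf_append_singleton, hheight, Multiset.cons_inj_right] at h

lemma cellsAux_perm_of_far {a b : ℤ} (hfar : 2 ≤ (a - b).natAbs) (acc : List (ℤ × ℕ))
    (l : List ℤ) : (cellsAux acc (a :: b :: l)).Perm (cellsAux acc (b :: a :: l)) := by
  simp only [cellsAux]
  rw [heightIn_append_singleton_of_far _ _ hfar,
    heightIn_append_singleton_of_far _ _ (by omega)]
  apply cellsAux_perm
  rw [List.append_assoc, List.append_assoc]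
  exact (List.Perm.swap _ _ []).append_left acc

lemma swap_decomp : ∀ (l : List ℤ) (r : ℕ), r + 1 < l.length →
    l = l.take r ++ l.getD r 0 :: l.getD (r + 1) 0 :: l.drop (r + 2) ∧
    (l.set r (l.getD (r + 1) 0)).set (r + 1) (l.getD r 0)
      = l.take r ++ l.getD (r + 1) 0 :: l.getD r 0 :: l.drop (r + 2)
  | [], _, h | [_], _, h => by simp at h
  | _ :: _ :: _, 0, _ => by simp [List.set]
  | a :: b :: t, r + 1, h => by
    obtain ⟨h₁, h₂⟩ := swap_decomp (b :: t) r (by simpa using h)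
    exact ⟨by simpa using congrArg (a :: ·) h₁,
      by simpa [List.set] using congrArg (a :: ·) h₂⟩

lemma admSwap_append_cons_cons : ∀ (p : List ℤ) {a b : ℤ} {t : List ℤ},
    2 ≤ (a - b).natAbs → AdmSwap (p ++ a :: b :: t) (p ++ b :: a :: t)
  | [], _, _, _, h => ⟨0, by simp, by simpa using h, by simp [List.set]⟩
  | x :: p, _, _, _, h => by
    obtain ⟨r, h₁, h₂, h₃⟩ := admSwap_append_cons_cons p h
    exact ⟨r + 1, by simpa using h₁, by simpa using h₂,
      by simpa [List.set] using congrArg (x :: ·) h₃⟩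

lemma admSwap_iff {l l' : List ℤ} : AdmSwap l l' ↔
    ∃ p a b t, 2 ≤ (a - b).natAbs ∧ l = p ++ a :: b :: t ∧ l' = p ++ b :: a :: t := by
  constructor
  · rintro ⟨r, hr, hfar, rfl⟩
    obtain ⟨h₁, h₂⟩ := swap_decomp l r hr
    exact ⟨l.take r, l.getD r 0, l.getD (r + 1) 0, l.drop (r + 2), hfar, h₁, h₂⟩
  · rintro ⟨p, a, b, t, hfar, rfl, rfl⟩
    exact admSwap_append_cons_cons p hfar

lemma AdmSwap.append_singleton {l l' : List ℤ} (h : AdmSwap l l') (x : ℤ) :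
    AdmSwap (l ++ [x]) (l' ++ [x]) := by
  obtain ⟨p, a, b, t, hfar, rfl, rfl⟩ := admSwap_iff.1 h
  exact admSwap_iff.2 ⟨p, a, b, t ++ [x], hfar, by simp, by simp⟩

lemma AdmSwap.conf_eq {l l' : List ℤ} (h : AdmSwap l l') : conf l = conf l' := by
  obtain ⟨p, a, b, t, hfar, rfl, rfl⟩ := admSwap_iff.1 h
  rw [conf, conf, Multiset.coe_eq_coe, cells_append, cells_append]
  exact cellsAux_perm_of_far hfar _ t

lemma conf_eq_of_reflTransGen {l l' : List ℤ} (h : Relation.ReflTransGen AdmSwap l l') :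
    conf l = conf l' := by
  induction h with
  | refl => rfl
  | tail _ hstep ih => exact ih.trans hstep.conf_eq

lemma reflTransGen_append_singleton_of_far {j : ℤ} {s : List ℤ}
    (hfar : ∀ k ∈ s, 2 ≤ (k - j).natAbs) (p : List ℤ) :
    Relation.ReflTransGen AdmSwap (p ++ s ++ [j]) (p ++ j :: s) := by
  induction s generalizing p with
  | nil => simpa using .refl
  | cons k s ih =>
    have hmove := ih (fun k' hk' => hfar k' (List.mem_cons_of_mem k hk')) (p ++ [k])
    simp only [List.append_assoc, List.cons_append, List.nil_append] at hmove ⊢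
    exact hmove.tail (admSwap_append_cons_cons p (by have := hfar k (by simp); omega))

lemma exists_eq_append_cons_of_mem_cells {j : ℤ} {h : ℕ} {m : List ℤ}
    (hmem : (j, h) ∈ cells m) : ∃ p s, m = p ++ j :: s ∧ heightIn (cells p) j = h := by
  induction m using List.reverseRecOn with
  | nil => simp [cells, cellsAux] at hmem
  | append_singleton q k ih =>
    rw [cells_append_singleton, List.mem_append, List.mem_singleton, Prod.mk.injEq] at hmem
    rcases hmem with hmem | ⟨rfl, rfl⟩
    · obtain ⟨p, s, rfl, hh⟩ := ih hmem
      exact ⟨p, s ++ [k], by simp, hh⟩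
    · exact ⟨q, [], rfl, rfl⟩

/-- A bead placed after `(j, heightIn (cells p) j)` on a runner next to `j` would rest
above it, raising the height at `j` by at least two. -/
lemma far_of_heightIn_le {p s : List ℤ} {j : ℤ}
    (hs : heightIn (cells (p ++ j :: s)) j ≤ heightIn (cells p) j + 1) :
    ∀ k ∈ s, 2 ≤ (k - j).natAbs := by
  induction s using List.reverseRecOn with
  | nil => simp
  | append_singleton s k ih =>
    set H := heightIn (cells p) j
    rw [show p ++ j :: (s ++ [k]) = p ++ j :: s ++ [k] by simp, cells_append_singleton] at hs
    have hbelow := heightIn_le_iff.1 hs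
    have hjmem : (j, H) ∈ cells (p ++ j :: s) := by
      rw [show p ++ j :: s = p ++ [j] ++ s by simp]
      exact (cells_prefix_cells_append _ s).subset (by simp [cells_append_singleton, H])
    intro k' hk'
    rcases List.mem_append.1 hk' with hk' | hk'
    · exact ih (heightIn_le_iff.2 fun x hx => hbelow x (List.mem_append_left _ hx)) k' hk'
    · rw [List.mem_singleton.1 hk']
      by_contra hnear
      have habove : H < heightIn (cells (p ++ j :: s)) k :=
        lt_heightIn_of_mem hjmem (by dsimp only; omega)
      have hbelow_k : heightIn (cells (p ++ j :: s)) k < H + 1 :=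
        hbelow _ (List.mem_append_right _ (List.mem_singleton_self _)) (by dsimp only; omega)
      omega

lemma reflTransGen_of_conf_eq {l l' : List ℤ} (h : conf l = conf l') :
    Relation.ReflTransGen AdmSwap l l' := by
  induction l using List.reverseRecOn generalizing l' with
  | nil => rw [eq_nil_of_conf_eq_zero h.symm]
  | append_singleton l j ih =>
    have hmem : (j, heightIn (cells l) j) ∈ cells l' :=
      (Multiset.coe_eq_coe.1 h).subset (by simp [cells_append_singleton])
    obtain ⟨p, s, rfl, hp⟩ := exists_eq_append_cons_of_mem_cells hmem
    have hfar : ∀ k ∈ s, 2 ≤ (k - j).natAbs := by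
      refine far_of_heightIn_le (p := p) (le_of_eq ?_)
      rw [← heightIn_cells_eq_of_conf_eq h, cells_append_singleton,
        heightIn_append_singleton_self, hp]
    have hmove := reflTransGen_append_singleton_of_far hfar p
    have hshorter := ih (conf_eq_of_conf_append_singleton_eq (h.trans
      (conf_eq_of_reflTransGen hmove).symm))
    exact (hshorter.lift (· ++ [j]) fun _ _ hstep => hstep.append_singleton j).trans hmove

/-- Kleshchev–Ram.  Two sequences lie in the same connected
component of the weight graph `G_ν` iff they have the same configuration;
moreover `i ↦ T^i` and `T ↦ i^T` are mutually inverse bijections between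
standard `λ`-tableaux and sequences `i` with `conf(i) = λ`. -/
theorem weight_graph_components_and_tableaux :
    (∀ l l' : List ℤ, Relation.ReflTransGen AdmSwap l l' ↔ conf l = conf l') ∧
    (∀ l : List ℤ, IsStandardTableau (conf l) (cells l) ∧
      (cells l).map Prod.fst = l) ∧
    (∀ (c : Multiset (ℤ × ℕ)) (t : List (ℤ × ℕ)), IsStandardTableau c t →
      conf (t.map Prod.fst) = c ∧ cells (t.map Prod.fst) = t) := by
  refine ⟨fun l l' => ⟨conf_eq_of_reflTransGen, reflTransGen_of_conf_eq⟩,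
    fun l => ⟨⟨rfl, by rw [map_fst_cells]⟩, map_fst_cells l⟩, ?_⟩
  rintro c t ⟨hc, ht⟩
  exact ⟨by rw [conf, ← ht, hc], ht.symm⟩

end KLRPaper
end

section
/- Let Γ be of type A_∞ and Λ = Σ λ_i·i ∈ ℕ[I]. If i = i_1…i_m ∈ Seq(ν) is an m-stable sequence (conf(i) = a_m(i)), then x_{m,i}^{b_m} = 0 in R_ν^Λ, where b_m = Σ_{j ∈ Supp(a_m(i))} λ_j. -/
namespace KLRPaper


/-- The sequence `q` is `m`-stable: its configuration coincides with its
`m`-stable antigravity configuration, i.e. no two beads share a runner and every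
bead is trapped below the anchored last bead. -/
def MStable {m : ℕ} (q : Fin m → ℤ) : Prop :=
  Function.Injective q ∧ ∀ k < m, Trapped (List.ofFn q) (m - 1) k


/-! ### Auxiliary material for the proof -/

section Helpers

open Function

variable {m : ℕ}

lemma swapSeq_swapSeq {I : Type} (t : ℕ) (i : Fin m → I) :
    swapSeq t (swapSeq t i) = i := by
  funext k
  by_cases h : t + 1 < m
  · simp only [swapSeq, dif_pos h, Equiv.swap_apply_self]
  · simp only [swapSeq, dif_neg h]

lemma swapSeq_apply_fst {I : Type} {t : ℕ} (ht : t + 1 < m) (i : Fin m → I) (k : Fin m)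
    (hk : k.val = t) : swapSeq t i k = i ⟨t + 1, ht⟩ := by
  have hk' : k = (⟨t, Nat.lt_of_succ_lt ht⟩ : Fin m) := Fin.ext hk
  simp [swapSeq, ht, hk', Equiv.swap_apply_left]

lemma swapSeq_apply_snd {I : Type} {t : ℕ} (ht : t + 1 < m) (i : Fin m → I) (k : Fin m)
    (hk : k.val = t + 1) : swapSeq t i k = i ⟨t, Nat.lt_of_succ_lt ht⟩ := by
  have hk' : k = (⟨t + 1, ht⟩ : Fin m) := Fin.ext hk
  simp [swapSeq, ht, hk', Equiv.swap_apply_right]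

lemma swapSeq_apply_other {I : Type} {t : ℕ} (ht : t + 1 < m) (i : Fin m → I) (k : Fin m)
    (h1 : k.val ≠ t) (h2 : k.val ≠ t + 1) : swapSeq t i k = i k := by
  rw [swapSeq, dif_pos ht, Equiv.swap_apply_of_ne_of_ne]
  · exact fun h => h1 (by simpa using congrArg Fin.val h)
  · exact fun h => h2 (by simpa using congrArg Fin.val h)

lemma swapSeq_injective {I : Type} (t : ℕ) {i : Fin m → I} (hi : Injective i) :
    Injective (swapSeq t i) := by
  by_cases h : t + 1 < m
  · have e : swapSeq t i
        = i ∘ (Equiv.swap (⟨t, Nat.lt_of_succ_lt h⟩ : Fin m) ⟨t + 1, h⟩) := by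
      funext k
      rw [swapSeq, dif_pos h]
      rfl
    rw [e]
    exact hi.comp (Equiv.swap _ _).injective
  · have e : swapSeq t i = i := by
      funext k
      rw [swapSeq, dif_neg h]
    rw [e]
    exact hi

open Classical in
/-- The maximal "interval component" of `x` inside the finite set `V`. -/
noncomputable def comp (x : ℤ) (V : Finset ℤ) : Finset ℤ :=
  V.filter fun v => ∀ w, min x v ≤ w → w ≤ max x v → w ∈ V

lemma mem_comp {x v : ℤ} {V : Finset ℤ} :
    v ∈ comp x V ↔ v ∈ V ∧ ∀ w, min x v ≤ w → w ≤ max x v → w ∈ V := by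
  simp [comp]

lemma comp_subset (x : ℤ) (V : Finset ℤ) : comp x V ⊆ V :=
  Finset.filter_subset _ _

lemma self_mem_comp {x : ℤ} {V : Finset ℤ} (hx : x ∈ V) : x ∈ comp x V := by
  rw [mem_comp]
  refine ⟨hx, fun w h1 h2 => ?_⟩
  have : w = x := by omega
  rwa [this]

lemma comp_erase_subset (x y : ℤ) (V : Finset ℤ) :
    comp x (V.erase y) ⊆ comp x V := by
  intro v hv
  rw [mem_comp] at hv ⊢
  exact ⟨Finset.mem_of_mem_erase hv.1,
    fun w h1 h2 => Finset.mem_of_mem_erase (hv.2 w h1 h2)⟩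

lemma comp_erase_subset_adj {x y : ℤ} (hadj : (y - x).natAbs = 1) {V : Finset ℤ}
    (hx : x ∈ V) : comp y (V.erase x) ⊆ comp x V := by
  intro v hv
  rw [mem_comp] at hv ⊢
  obtain ⟨hv1, hv2⟩ := hv
  have hvx : v ≠ x := Finset.ne_of_mem_erase hv1
  have hxout : ¬ (min y v ≤ x ∧ x ≤ max y v) := by
    rintro ⟨h1, h2⟩
    exact (Finset.notMem_erase x V) (hv2 x h1 h2)
  refine ⟨Finset.mem_of_mem_erase hv1, fun w h1 h2 => ?_⟩
  by_cases hwx : w = x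
  · rwa [hwx]
  · exact Finset.mem_of_mem_erase (hv2 w (by omega) (by omega))

lemma comp_disjoint {x y : ℤ} (hadj : (y - x).natAbs = 1) {V : Finset ℤ} :
    Disjoint (comp y (V.erase x)) (comp x (V.erase y)) := by
  rw [Finset.disjoint_left]
  intro v hv1 hv2
  rw [mem_comp] at hv1 hv2
  have hvx : v ≠ x := Finset.ne_of_mem_erase hv1.1
  have hvy : v ≠ y := Finset.ne_of_mem_erase hv2.1
  have hxout : ¬ (min y v ≤ x ∧ x ≤ max y v) := by
    rintro ⟨h1, h2⟩
    exact (Finset.notMem_erase x V) (hv1.2 x h1 h2)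
  have hyout : ¬ (min x v ≤ y ∧ y ≤ max x v) := by
    rintro ⟨h1, h2⟩
    exact (Finset.notMem_erase y V) (hv2.2 y h1 h2)
  omega

/-- The set of values of `i` in positions `≤ t`. -/
def Vpre (t : ℕ) (i : Fin m → ℤ) : Finset ℤ :=
  (Finset.univ.filter fun k : Fin m => k.val ≤ t).image i

lemma mem_Vpre {t : ℕ} {i : Fin m → ℤ} {v : ℤ} :
    v ∈ Vpre t i ↔ ∃ k : Fin m, k.val ≤ t ∧ i k = v := by
  simp [Vpre]

lemma self_mem_Vpre {t : ℕ} {i : Fin m → ℤ} (ht : t < m) :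
    i ⟨t, ht⟩ ∈ Vpre t i :=
  mem_Vpre.2 ⟨⟨t, ht⟩, le_refl _, rfl⟩

lemma Vpre_succ_erase {t : ℕ} (ht : t + 1 < m) {i : Fin m → ℤ}
    (hi : Function.Injective i) :
    Vpre t i = (Vpre (t + 1) i).erase (i ⟨t + 1, ht⟩) := by
  ext v
  rw [mem_Vpre, Finset.mem_erase, mem_Vpre]
  constructor
  · rintro ⟨k, hk, rfl⟩
    refine ⟨fun h => ?_, k, by omega, rfl⟩
    have h2 : (k : ℕ) = t + 1 := congrArg Fin.val (hi h)
    omega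
  · rintro ⟨hne, k, hk, rfl⟩
    refine ⟨k, ?_, rfl⟩
    rcases Nat.lt_or_ge k.val (t + 1) with h | h
    · omega
    · exact absurd (congrArg i (Fin.ext (by omega : k.val = t + 1))) hne

lemma Vpre_swap {t : ℕ} (ht : t + 1 < m) {i : Fin m → ℤ}
    (hi : Function.Injective i) :
    Vpre t (swapSeq t i) = (Vpre (t + 1) i).erase (i ⟨t, Nat.lt_of_succ_lt ht⟩) := by
  ext v
  rw [mem_Vpre, Finset.mem_erase, mem_Vpre]
  constructor
  · rintro ⟨k, hk, rfl⟩
    rcases Nat.lt_or_ge k.val t with h | h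
    · rw [swapSeq_apply_other ht i k (by omega) (by omega)]
      refine ⟨fun hh => ?_, k, by omega, rfl⟩
      have h2 : (k : ℕ) = t := congrArg Fin.val (hi hh)
      omega
    · have hkt : k.val = t := by omega
      rw [swapSeq_apply_fst ht i k hkt]
      refine ⟨fun hh => ?_, ⟨t + 1, ht⟩, Nat.le_refl _, rfl⟩
      have h2 : t + 1 = t := congrArg Fin.val (hi hh)
      omega
  · rintro ⟨hne, k, hk, rfl⟩
    have hkt : k.val ≠ t := fun h => hne (congrArg i (Fin.ext h))
    rcases Nat.lt_or_ge k.val t with h | h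
    · exact ⟨k, by omega, swapSeq_apply_other ht i k (by omega) (by omega)⟩
    · refine ⟨⟨t, Nat.lt_of_succ_lt ht⟩, le_refl _, ?_⟩
      rw [swapSeq_apply_fst ht i _ rfl]
      exact congrArg i (Fin.ext (by omega : t + 1 = k.val))

variable {A : Type} [Ring A]

lemma pow_mul_e_zero_mono (K : KLR ℤ adjZ m A) (r : Fin m) (i : Fin m → ℤ)
    {c c' : ℕ} (h : K.x r i ^ c * K.e i = 0) (hcc : c ≤ c') :
    K.x r i ^ c' * K.e i = 0 := by
  have hc : c' = (c' - c) + c := by omega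
  rw [hc, pow_add, mul_assoc, h, mul_zero]

lemma x_pow_semiconj (K : KLR ℤ adjZ m A) {t : ℕ} (ht : t + 1 < m)
    {i : Fin m → ℤ} (hne : i ⟨t, Nat.lt_of_succ_lt ht⟩ ≠ i ⟨t + 1, ht⟩) (n : ℕ) :
    K.x ⟨t + 1, ht⟩ (swapSeq t i) ^ n * K.δ t i
      = K.δ t i * K.x ⟨t, Nat.lt_of_succ_lt ht⟩ i ^ n := by
  have h1 := K.δx_diff1 t ht i hne
  induction n with
  | zero => simp
  | succ n ih =>
    calc K.x ⟨t + 1, ht⟩ (swapSeq t i) ^ (n + 1) * K.δ t i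
        = K.x ⟨t + 1, ht⟩ (swapSeq t i) ^ n
            * (K.x ⟨t + 1, ht⟩ (swapSeq t i) * K.δ t i) := by
          rw [pow_succ, mul_assoc]
      _ = K.x ⟨t + 1, ht⟩ (swapSeq t i) ^ n
            * (K.δ t i * K.x ⟨t, Nat.lt_of_succ_lt ht⟩ i) := by rw [← h1]
      _ = (K.x ⟨t + 1, ht⟩ (swapSeq t i) ^ n * K.δ t i)
            * K.x ⟨t, Nat.lt_of_succ_lt ht⟩ i := by rw [mul_assoc]
      _ = K.δ t i * K.x ⟨t, Nat.lt_of_succ_lt ht⟩ i ^ n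
            * K.x ⟨t, Nat.lt_of_succ_lt ht⟩ i := by rw [ih]
      _ = K.δ t i * K.x ⟨t, Nat.lt_of_succ_lt ht⟩ i ^ (n + 1) := by
          rw [pow_succ, mul_assoc]

/-- Semiconjugation for the swapped sequence, rewritten back to `i`. -/
lemma x_pow_semiconj' (K : KLR ℤ adjZ m A) {t : ℕ} (ht : t + 1 < m)
    {i : Fin m → ℤ} (hne : i ⟨t, Nat.lt_of_succ_lt ht⟩ ≠ i ⟨t + 1, ht⟩) (n : ℕ) :
    K.x ⟨t + 1, ht⟩ i ^ n * K.δ t (swapSeq t i)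
      = K.δ t (swapSeq t i) * K.x ⟨t, Nat.lt_of_succ_lt ht⟩ (swapSeq t i) ^ n := by
  have hjne : swapSeq t i ⟨t, Nat.lt_of_succ_lt ht⟩ ≠ swapSeq t i ⟨t + 1, ht⟩ := by
    rw [swapSeq_apply_fst ht i _ rfl, swapSeq_apply_snd ht i _ rfl]
    exact hne.symm
  have h := x_pow_semiconj K ht hjne n
  rwa [swapSeq_swapSeq] at h

lemma step_far (K : KLR ℤ adjZ m A) {t : ℕ} (ht : t + 1 < m) {i : Fin m → ℤ}
    (hne : i ⟨t, Nat.lt_of_succ_lt ht⟩ ≠ i ⟨t + 1, ht⟩)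
    (hnadj : ¬ adjZ (i ⟨t, Nat.lt_of_succ_lt ht⟩) (i ⟨t + 1, ht⟩)) {c : ℕ}
    (hz : K.x ⟨t, Nat.lt_of_succ_lt ht⟩ (swapSeq t i) ^ c * K.e (swapSeq t i) = 0) :
    K.x ⟨t + 1, ht⟩ i ^ c * K.e i = 0 := by
  have horth := K.δδ_orth t ht i hne hnadj
  have hsc := x_pow_semiconj' K ht hne c
  have hed : K.e (swapSeq t i) * K.δ t i = K.δ t i := K.e_mul_δ t i
  calc K.x ⟨t + 1, ht⟩ i ^ c * K.e i
      = K.x ⟨t + 1, ht⟩ i ^ c * (K.δ t (swapSeq t i) * K.δ t i) := by rw [horth]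
    _ = (K.x ⟨t + 1, ht⟩ i ^ c * K.δ t (swapSeq t i)) * K.δ t i := by
        rw [mul_assoc]
    _ = K.δ t (swapSeq t i)
          * (K.x ⟨t, Nat.lt_of_succ_lt ht⟩ (swapSeq t i) ^ c * K.δ t i) := by
        rw [hsc, mul_assoc]
    _ = K.δ t (swapSeq t i)
          * (K.x ⟨t, Nat.lt_of_succ_lt ht⟩ (swapSeq t i) ^ c
              * (K.e (swapSeq t i) * K.δ t i)) := by rw [hed]
    _ = K.δ t (swapSeq t i)
          * ((K.x ⟨t, Nat.lt_of_succ_lt ht⟩ (swapSeq t i) ^ c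
              * K.e (swapSeq t i)) * K.δ t i) := by rw [mul_assoc]
    _ = 0 := by rw [hz, zero_mul, mul_zero]

lemma step_adj (K : KLR ℤ adjZ m A) {t : ℕ} (ht : t + 1 < m) {i : Fin m → ℤ}
    (hne : i ⟨t, Nat.lt_of_succ_lt ht⟩ ≠ i ⟨t + 1, ht⟩)
    (hadj : adjZ (i ⟨t, Nat.lt_of_succ_lt ht⟩) (i ⟨t + 1, ht⟩)) {a b : ℕ}
    (ha : K.x ⟨t, Nat.lt_of_succ_lt ht⟩ i ^ a * K.e i = 0)
    (hb : K.x ⟨t, Nat.lt_of_succ_lt ht⟩ (swapSeq t i) ^ b * K.e (swapSeq t i) = 0) :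
    K.x ⟨t + 1, ht⟩ i ^ (a + b) * K.e i = 0 := by
  have hdd := K.δδ_adj t ht i hadj
  have hed : K.e (swapSeq t i) * K.δ t i = K.δ t i := K.e_mul_δ t i
  have hfirst : ∀ n, K.x ⟨t + 1, ht⟩ i ^ (b + n)
      * (K.δ t (swapSeq t i) * K.δ t i) = 0 := by
    intro n
    have hsc := x_pow_semiconj' K ht hne (b + n)
    calc K.x ⟨t + 1, ht⟩ i ^ (b + n) * (K.δ t (swapSeq t i) * K.δ t i)
        = (K.x ⟨t + 1, ht⟩ i ^ (b + n) * K.δ t (swapSeq t i)) * K.δ t i := by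
          rw [mul_assoc]
      _ = K.δ t (swapSeq t i)
            * (K.x ⟨t, Nat.lt_of_succ_lt ht⟩ (swapSeq t i) ^ (b + n) * K.δ t i) := by
          rw [hsc, mul_assoc]
      _ = K.δ t (swapSeq t i)
            * (K.x ⟨t, Nat.lt_of_succ_lt ht⟩ (swapSeq t i) ^ n
                * ((K.x ⟨t, Nat.lt_of_succ_lt ht⟩ (swapSeq t i) ^ b
                    * K.e (swapSeq t i)) * K.δ t i)) := by
          rw [add_comm b n, pow_add, mul_assoc, mul_assoc, hed]
      _ = 0 := by rw [hb, zero_mul, mul_zero, mul_zero]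
  have hfirstE : ∀ n, K.x ⟨t + 1, ht⟩ i ^ (b + n)
      * ((K.δ t (swapSeq t i) * K.δ t i) * K.e i) = 0 := by
    intro n
    rw [← mul_assoc, hfirst n, zero_mul]
  have hcomm : Commute (K.x ⟨t + 1, ht⟩ i) (K.x ⟨t, Nat.lt_of_succ_lt ht⟩ i) :=
    K.x_mul_x ⟨t + 1, ht⟩ ⟨t, Nat.lt_of_succ_lt ht⟩ i
  have hkey : ∀ k, K.x ⟨t + 1, ht⟩ i ^ (b + k) * K.e i
      = (-(K.x ⟨t, Nat.lt_of_succ_lt ht⟩ i)) ^ k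
          * (K.x ⟨t + 1, ht⟩ i ^ b * K.e i) := by
    intro k
    induction k with
    | zero => rw [pow_zero, one_mul, add_zero]
    | succ k ih =>
      have e1 : K.x ⟨t + 1, ht⟩ i ^ (b + (k + 1)) * K.e i
          = K.x ⟨t + 1, ht⟩ i ^ (b + k)
              * ((K.x ⟨t, Nat.lt_of_succ_lt ht⟩ i + K.x ⟨t + 1, ht⟩ i) * K.e i)
            - K.x ⟨t + 1, ht⟩ i ^ (b + k)
              * (K.x ⟨t, Nat.lt_of_succ_lt ht⟩ i * K.e i) := by
        rw [add_mul, ← mul_sub, add_sub_cancel_left, ← mul_assoc, ← pow_succ]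
        rfl
      have e2 : K.x ⟨t + 1, ht⟩ i ^ (b + k)
            * (K.x ⟨t, Nat.lt_of_succ_lt ht⟩ i * K.e i)
          = K.x ⟨t, Nat.lt_of_succ_lt ht⟩ i
              * (K.x ⟨t + 1, ht⟩ i ^ (b + k) * K.e i) := by
        rw [← mul_assoc, (hcomm.pow_left (b + k)).eq, mul_assoc]
      have hxk : Commute (K.x ⟨t, Nat.lt_of_succ_lt ht⟩ i)
          ((-(K.x ⟨t, Nat.lt_of_succ_lt ht⟩ i)) ^ k) :=
        ((Commute.refl (K.x ⟨t, Nat.lt_of_succ_lt ht⟩ i)).neg_right).pow_right k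
      have h3 : (-(K.x ⟨t, Nat.lt_of_succ_lt ht⟩ i)) ^ (k + 1)
          = -((-(K.x ⟨t, Nat.lt_of_succ_lt ht⟩ i)) ^ k
              * K.x ⟨t, Nat.lt_of_succ_lt ht⟩ i) := by
        rw [pow_succ, mul_neg]
      rw [e1, ← hdd, hfirstE k, zero_sub, e2, ih, h3, neg_mul, ← mul_assoc, hxk.eq]
  have hfin := hkey a
  have hc2 : Commute (K.x ⟨t, Nat.lt_of_succ_lt ht⟩ i ^ a) (K.x ⟨t + 1, ht⟩ i ^ b) :=
    (hcomm.symm).pow_pow a b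
  have hswap : K.x ⟨t, Nat.lt_of_succ_lt ht⟩ i ^ a * (K.x ⟨t + 1, ht⟩ i ^ b * K.e i)
      = K.x ⟨t + 1, ht⟩ i ^ b * (K.x ⟨t, Nat.lt_of_succ_lt ht⟩ i ^ a * K.e i) := by
    rw [← mul_assoc, hc2.eq, mul_assoc]
  calc K.x ⟨t + 1, ht⟩ i ^ (a + b) * K.e i
      = K.x ⟨t + 1, ht⟩ i ^ (b + a) * K.e i := by rw [Nat.add_comm a b]
    _ = (-(K.x ⟨t, Nat.lt_of_succ_lt ht⟩ i)) ^ a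
          * (K.x ⟨t + 1, ht⟩ i ^ b * K.e i) := hfin
    _ = ((-1 : A) ^ a * K.x ⟨t, Nat.lt_of_succ_lt ht⟩ i ^ a)
          * (K.x ⟨t + 1, ht⟩ i ^ b * K.e i) := by rw [neg_pow]
    _ = (-1 : A) ^ a * (K.x ⟨t, Nat.lt_of_succ_lt ht⟩ i ^ a
          * (K.x ⟨t + 1, ht⟩ i ^ b * K.e i)) := by rw [mul_assoc]
    _ = (-1 : A) ^ a * (K.x ⟨t + 1, ht⟩ i ^ b
          * (K.x ⟨t, Nat.lt_of_succ_lt ht⟩ i ^ a * K.e i)) := by rw [hswap]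
    _ = 0 := by rw [ha, mul_zero, mul_zero]

lemma main_induction {Λ : ℤ →₀ ℕ} (K : CycKLR ℤ adjZ m A Λ) :
    ∀ (t : ℕ) (ht : t < m) (i : Fin m → ℤ), Function.Injective i →
      ∃ S : Finset ℤ, S ⊆ comp (i ⟨t, ht⟩) (Vpre t i) ∧
        K.x ⟨t, ht⟩ i ^ (∑ j ∈ S, Λ j) * K.e i = 0 := by
  intro t
  induction t with
  | zero =>
    intro ht i hi
    refine ⟨{i ⟨0, ht⟩}, ?_, ?_⟩
    · rw [Finset.singleton_subset_iff]
      exact self_mem_comp (self_mem_Vpre ht)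
    · rw [Finset.sum_singleton]
      exact K.cyc ht i
  | succ t IH =>
    intro ht i hi
    have ht' : t < m := Nat.lt_of_succ_lt ht
    obtain ⟨S1, hS1sub, hS1⟩ := IH ht' i hi
    obtain ⟨S2, hS2sub, hS2⟩ := IH ht' (swapSeq t i) (swapSeq_injective t hi)
    have hval : swapSeq t i ⟨t, ht'⟩ = i ⟨t + 1, ht⟩ := swapSeq_apply_fst ht i _ rfl
    have hne : i ⟨t, ht'⟩ ≠ i ⟨t + 1, ht⟩ := fun h => by
      have h2 : t = t + 1 := congrArg Fin.val (hi h)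
      omega
    rw [Vpre_swap ht hi, hval] at hS2sub
    rw [Vpre_succ_erase ht hi] at hS1sub
    by_cases hadj : adjZ (i ⟨t, ht'⟩) (i ⟨t + 1, ht⟩)
    · refine ⟨S1 ∪ S2, ?_, ?_⟩
      · apply Finset.union_subset
        · exact hS1sub.trans (comp_erase_subset_adj hadj (self_mem_Vpre ht))
        · exact hS2sub.trans (comp_erase_subset _ _ _)
      · have hdisj : Disjoint S1 S2 :=
          Disjoint.mono hS1sub hS2sub (comp_disjoint hadj)
        rw [Finset.sum_union hdisj]
        exact step_adj K.toKLR ht hne hadj hS1 hS2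
    · refine ⟨S2, ?_, ?_⟩
      · exact hS2sub.trans (comp_erase_subset _ _ _)
      · exact step_far K.toKLR ht hne hadj hS2

end Helpers

/-- For `Γ` of type `A_∞` and `Λ = Σ λ_i·i ∈ ℕ[I]`: if
`i = i₁…i_m` is an `m`-stable sequence (`conf(i) = a_m(i)`), then
`x_{m,i}^{b_m} = 0` in `R_ν^Λ`, where `b_m = Σ_{j ∈ Supp(a_m(i))} λ_j`. -/
theorem mstable_nilpotency {m : ℕ} {A : Type} [Ring A] {Λ : ℤ →₀ ℕ}
    (K : CycKLR ℤ adjZ m A Λ) (hm : 0 < m) (q : Fin m → ℤ) (hst : MStable q) :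
    K.x ⟨m - 1, by omega⟩ q ^ agBound Λ (List.ofFn q) (m - 1) * K.e q = 0 := by
  obtain ⟨S, hSsub, hS⟩ := main_induction K (m - 1) (by omega) q hst.1
  have hsub2 : S ⊆ trappedRunners (List.ofFn q) (m - 1) := by
    intro v hv
    have hv' := comp_subset _ _ (hSsub hv)
    obtain ⟨k, hk, rfl⟩ := mem_Vpre.1 hv'
    simp only [trappedRunners, Finset.mem_image, Finset.mem_filter, Finset.mem_range]
    refine ⟨k.val, ⟨by simp, hst.2 k.val k.isLt⟩, ?_⟩
    rw [List.getD_eq_getElem _ _ (by simp)]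
    rw [List.getElem_ofFn]
  have hle : ∑ j ∈ S, Λ j ≤ agBound Λ (List.ofFn q) (m - 1) :=
    Finset.sum_le_sum_of_subset hsub2
  exact pow_mul_e_zero_mono K.toKLR _ q hS hle

end KLRPaper
end

section
/- In R_ν^Λ of type A_∞, if conf(i) contains λ_i + 1 beads stacked on a single runner i with no beads trapping them (so that the bottom one can be given all dots), then 1_i = 0 in R_ν^Λ. -/
namespace KLRPaper


section Nil

variable {m : ℕ} {A : Type} [Ring A] {Λ : ℤ →₀ ℕ}
variable (K : CycKLR ℤ adjZ m A Λ) (p : Fin m → ℤ)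

/-- The dot on strand `s` (junk value `0` out of range). -/
noncomputable def Xd (s : ℕ) : A := if h : s < m then K.x ⟨s, h⟩ p else 0

lemma Xd_eq (s : ℕ) (h : s < m) : Xd K p s = K.x ⟨s, h⟩ p := dif_pos h

/-- `Gh K p r k` is the complete homogeneous polynomial of degree `k` in the
dots `x_0, …, x_{r-1}`, multiplied by the idempotent `e p`. -/
noncomputable def Gh : ℕ → ℕ → A
  | 0, 0 => K.e p
  | 0, _+1 => 0
  | _+1, 0 => K.e p
  | r+1, k+1 => Gh r (k+1) + Xd K p r * Gh (r+1) k
  termination_by r k => (r, k)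

lemma Gh_zero (r : ℕ) : Gh K p r 0 = K.e p := by cases r <;> rw [Gh]

lemma Gh0_succ (k : ℕ) : Gh K p 0 (k+1) = 0 := by rw [Gh]

lemma Gh_succ (r k : ℕ) :
    Gh K p (r+1) (k+1) = Gh K p r (k+1) + Xd K p r * Gh K p (r+1) k := by rw [Gh]

/-- `Gz K p z r k`: complete homogeneous of degree `k` in `x_0, …, x_{r-1}, x_z`. -/
noncomputable def Gz (z r : ℕ) : ℕ → A
  | 0 => K.e p
  | k+1 => Gh K p r (k+1) + Xd K p z * Gz z r k

lemma L_EE : K.e p * K.e p = K.e p := by simpa using K.e_mul_e p p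

lemma L_EX (s : ℕ) : K.e p * Xd K p s = Xd K p s := by
  unfold Xd; split
  · exact K.e_mul_x _ p
  · simp

lemma L_XE (s : ℕ) : Xd K p s * K.e p = Xd K p s := by
  unfold Xd; split
  · exact K.x_mul_e _ p
  · simp

lemma L_XX (s t : ℕ) : Xd K p s * Xd K p t = Xd K p t * Xd K p s := by
  unfold Xd; split <;> split <;> simp [K.x_mul_x]

lemma L_EGh (r k : ℕ) : K.e p * Gh K p r k = Gh K p r k := by
  induction r with
  | zero => cases k <;> simp [Gh_zero, Gh0_succ, L_EE]
  | succ r ih =>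
    induction k with
    | zero => simp [Gh_zero, L_EE]
    | succ k ihk =>
      rw [Gh_succ, mul_add, ih, ← mul_assoc, L_EX]

lemma L_EGz (z r k : ℕ) : K.e p * Gz K p z r k = Gz K p z r k := by
  induction k with
  | zero => simp [Gz, L_EE]
  | succ k ihk => rw [Gz, mul_add, L_EGh, ← mul_assoc, L_EX]

end Nil
section Cross

variable {m : ℕ} {A : Type} [Ring A] {Λ : ℤ →₀ ℕ}
variable (K : CycKLR ℤ adjZ m A Λ) (p : Fin m → ℤ) (r : ℕ)

lemma swapSeq_eq_self_s16 (hr : r + 1 < m)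
    (heq : p ⟨r, Nat.lt_of_succ_lt hr⟩ = p ⟨r+1, hr⟩) :
    swapSeq r p = p := by
  funext k
  simp only [swapSeq, dif_pos hr, Equiv.swap_apply_def]
  split_ifs with h1 h2
  · rw [h1]; exact heq.symm
  · rw [h2]; exact heq
  · rfl

lemma L_DE : K.δ r p * K.e p = K.δ r p := K.δ_mul_e r p

lemma L_ED (hr : r + 1 < m) (heq : p ⟨r, Nat.lt_of_succ_lt hr⟩ = p ⟨r+1, hr⟩) :
    K.e p * K.δ r p = K.δ r p := by
  have h := K.e_mul_δ r p
  rwa [swapSeq_eq_self_s16 p r hr heq] at h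

lemma L_DD (hr : r + 1 < m) (heq : p ⟨r, Nat.lt_of_succ_lt hr⟩ = p ⟨r+1, hr⟩) :
    K.δ r p * K.δ r p = 0 := by
  have h := K.δδ_same r hr p heq
  rwa [swapSeq_eq_self_s16 p r hr heq] at h

lemma L_DY (hr : r + 1 < m) (heq : p ⟨r, Nat.lt_of_succ_lt hr⟩ = p ⟨r+1, hr⟩) :
    K.δ r p * Xd K p r = Xd K p (r+1) * K.δ r p + K.e p := by
  have h := K.δx_same1 r hr p heq
  rw [swapSeq_eq_self_s16 p r hr heq] at h
  rw [Xd_eq K p r (Nat.lt_of_succ_lt hr), Xd_eq K p (r+1) hr, ← h]; abel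

lemma L_YD (hr : r + 1 < m) (heq : p ⟨r, Nat.lt_of_succ_lt hr⟩ = p ⟨r+1, hr⟩) :
    Xd K p r * K.δ r p = K.δ r p * Xd K p (r+1) + K.e p := by
  have h := K.δx_same2 r hr p heq
  rw [swapSeq_eq_self_s16 p r hr heq] at h
  rw [Xd_eq K p r (Nat.lt_of_succ_lt hr), Xd_eq K p (r+1) hr, ← h]; abel

lemma L_DXfar (hr : r + 1 < m) (heq : p ⟨r, Nat.lt_of_succ_lt hr⟩ = p ⟨r+1, hr⟩)
    (s : ℕ) (hs1 : s ≠ r) (hs2 : s ≠ r + 1) :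
    K.δ r p * Xd K p s = Xd K p s * K.δ r p := by
  unfold Xd; split
  · have h := K.δx_far r ⟨s, by assumption⟩ p hs1 hs2
    rwa [swapSeq_eq_self_s16 p r hr heq] at h
  · simp

lemma L_DGh (hr : r + 1 < m) (heq : p ⟨r, Nat.lt_of_succ_lt hr⟩ = p ⟨r+1, hr⟩) :
    ∀ j, j ≤ r → ∀ k, K.δ r p * Gh K p j k = Gh K p j k * K.δ r p := by
  intro j
  induction j with
  | zero =>
    intro _ k
    cases k
    · rw [Gh_zero, L_DE, L_ED K p r hr heq]
    · simp [Gh0_succ]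
  | succ j ih =>
    intro hj k
    induction k with
    | zero => rw [Gh_zero, L_DE, L_ED K p r hr heq]
    | succ k ihk =>
      rw [Gh_succ, mul_add, add_mul, ih (by omega), ← mul_assoc,
        L_DXfar K p r hr heq j (by omega) (by omega), mul_assoc, ihk, ← mul_assoc]

end Cross
section Core

variable {m : ℕ} {A : Type} [Ring A] {Λ : ℤ →₀ ℕ}
variable (K : CycKLR ℤ adjZ m A Λ) (p : Fin m → ℤ) (r : ℕ)

lemma Gz_zero (z j : ℕ) : Gz K p z j 0 = K.e p := rfl

lemma Gz_succ (z j k : ℕ) :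
    Gz K p z j (k+1) = Gh K p j (k+1) + Xd K p z * Gz K p z j k := rfl

lemma P_lemma (hr : r + 1 < m) (heq : p ⟨r, Nat.lt_of_succ_lt hr⟩ = p ⟨r+1, hr⟩) :
    ∀ k, Gh K p (r+1) (k+1) + Xd K p (r+1) * Gh K p (r+2) k
      = Gz K p (r+1) r (k+1) + Xd K p r * Gh K p (r+2) k := by
  have hcomm : ∀ w : A, Xd K p r * (Xd K p (r+1) * w)
      = Xd K p (r+1) * (Xd K p r * w) := by
    intro w; rw [← mul_assoc, L_XX, mul_assoc]
  intro k; induction k with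
  | zero =>
    rw [Gh_succ]
    simp only [Gh_zero, Gz_succ, Gz_zero]
    abel
  | succ k ih =>
    have h2 : Gz K p (r+1) r (k+1)
        = Gh K p (r+1) (k+1) + Xd K p (r+1) * Gh K p (r+2) k
          - Xd K p r * Gh K p (r+2) k := eq_sub_of_add_eq ih.symm
    rw [Gh_succ K p (r+1) k, Gh_succ K p r (k+1), Gz_succ, h2]
    simp only [mul_add, mul_sub, hcomm]
    abel

lemma I_lemma (hr : r + 1 < m) (heq : p ⟨r, Nat.lt_of_succ_lt hr⟩ = p ⟨r+1, hr⟩) :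
    ∀ k, K.δ r p * Gh K p (r+1) (k+1)
      = Gh K p (r+2) k + Gz K p (r+1) r (k+1) * K.δ r p := by
  intro k; induction k with
  | zero =>
    rw [Gh_succ]
    simp only [Gh_zero, Gz_succ, Gz_zero, L_XE]
    rw [mul_add, add_mul, L_DGh K p r hr heq r le_rfl, L_DY K p r hr heq]
    abel
  | succ k ih =>
    rw [Gh_succ K p r (k+1), Gh_succ K p (r+1) k, Gz_succ, mul_add,
      L_DGh K p r hr heq r le_rfl (k+2), ← mul_assoc, L_DY K p r hr heq,
      add_mul, mul_assoc, ih, L_EGh]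
    simp only [mul_add, add_mul, mul_assoc]
    abel

lemma II_lemma (hr : r + 1 < m) (heq : p ⟨r, Nat.lt_of_succ_lt hr⟩ = p ⟨r+1, hr⟩) :
    ∀ k, Gh K p (r+1) (k+1) * K.δ r p
      = K.δ r p * Gz K p (r+1) r (k+1) + Gh K p (r+2) k := by
  intro k; induction k with
  | zero =>
    rw [Gh_succ]
    simp only [Gh_zero, Gz_succ, Gz_zero, L_XE]
    rw [add_mul, mul_add, ← L_DGh K p r hr heq r le_rfl, L_YD K p r hr heq]
    abel
  | succ k ih =>
    have hp2 := P_lemma K p r hr heq k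
    rw [Gh_succ K p r (k+1), Gh_succ K p (r+1) k, Gz_succ, add_mul,
      ← L_DGh K p r hr heq r le_rfl (k+2), mul_assoc, ih, mul_add,
      ← mul_assoc, L_YD K p r hr heq, add_mul, L_EGz, hp2]
    simp only [mul_add, add_mul, mul_assoc]
    abel

lemma step_vanish (hr : r + 1 < m) (heq : p ⟨r, Nat.lt_of_succ_lt hr⟩ = p ⟨r+1, hr⟩)
    (k : ℕ) (hB : Gh K p (r+1) (k+1) = 0) : Gh K p (r+2) k = 0 := by
  set D := K.δ r p with hD
  set Y := Xd K p r with hY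
  set Z := Xd K p (r+1) with hZ
  set E := K.e p with hE
  set H := Gh K p (r+2) k with hH
  set B' := Gz K p (r+1) r (k+1) with hB'
  have e2 : D * B' = -H := by
    have h := II_lemma K p r hr heq k
    rw [hB, zero_mul] at h
    exact eq_neg_of_add_eq_zero_left h.symm
  have hHn : H = -(D * B') := by rw [e2, neg_neg]
  have e3 : D * H = 0 := by
    rw [hHn, mul_neg, ← mul_assoc, L_DD K p r hr heq, zero_mul, neg_zero]
  have e4 : B' = Z * H - Y * H := by
    have h := P_lemma K p r hr heq k
    rw [hB, zero_add] at h
    exact eq_sub_of_add_eq h.symm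
  have hDZ : D * Z = Y * D - E := eq_sub_of_add_eq (L_YD K p r hr heq).symm
  have e5 : D * (Z * H) = -H := by
    rw [← mul_assoc, hDZ, sub_mul, mul_assoc, e3, mul_zero, L_EGh, zero_sub]
  have e6 : D * (Y * H) = H := by
    rw [← mul_assoc, L_DY K p r hr heq, add_mul, mul_assoc, e3, mul_zero, L_EGh,
      zero_add]
  have efin : -H = -H - H := by
    calc -H = D * B' := e2.symm
    _ = D * (Z * H) - D * (Y * H) := by rw [e4, mul_sub]
    _ = -H - H := by rw [e5, e6]
  have h2 : -H - (-H - H) = 0 := by rw [← efin, sub_self]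
  simpa using h2

end Core
section Prefix

variable {m : ℕ} {A : Type} [Ring A] {Λ : ℤ →₀ ℕ}
variable (K : CycKLR ℤ adjZ m A Λ) (p : Fin m → ℤ)

lemma Gh_one (k : ℕ) : Gh K p 1 k = Xd K p 0 ^ k * K.e p := by
  induction k with
  | zero => rw [Gh_zero, pow_zero, one_mul]
  | succ k ih =>
    rw [Gh_succ, Gh0_succ, zero_add, ih, ← mul_assoc, ← pow_succ']

lemma prefix_vanish (c : ℤ) (ha : Λ c < m)
    (hp : ∀ j : Fin m, (j : ℕ) ≤ Λ c → p j = c) : K.e p = 0 := by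
  have chain : ∀ r, r ≤ Λ c → Gh K p (r+1) (Λ c - r) = 0 := by
    intro r
    induction r with
    | zero =>
      intro _
      have h0m : 0 < m := lt_of_le_of_lt (Nat.zero_le _) ha
      have hcyc := K.cyc h0m p
      rw [hp ⟨0, h0m⟩ (Nat.zero_le _)] at hcyc
      rw [Nat.sub_zero, Gh_one, Xd_eq K p 0 h0m]
      exact hcyc
    | succ r ih =>
      intro hr1
      have hrm : r + 1 < m := lt_of_le_of_lt hr1 ha
      have heq : p ⟨r, Nat.lt_of_succ_lt hrm⟩ = p ⟨r+1, hrm⟩ := by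
        rw [hp ⟨r, _⟩ (show r ≤ Λ c by omega), hp ⟨r+1, _⟩ (show r + 1 ≤ Λ c by omega)]
      have hprev := ih (by omega)
      have hsub : Λ c - r = (Λ c - (r+1)) + 1 := by omega
      rw [hsub] at hprev
      exact step_vanish K p r hrm heq _ hprev
  have hfin := chain (Λ c) le_rfl
  rwa [Nat.sub_self, Gh_zero] at hfin

end Prefix

/-- In `R_ν^Λ` of type `A_∞`: if `conf(i)` contains `λ_c + 1`
beads stacked consecutively on a single runner `c` with no other beads trapping
them (every bead on the same or an adjacent runner occurring no later than the
top of the stack belongs to the stack), then `1_i = 0` in `R_ν^Λ`. -/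
theorem stacked_beads_idempotent_vanishes {m : ℕ} {A : Type} [Ring A]
    {Λ : ℤ →₀ ℕ} (K : CycKLR ℤ adjZ m A Λ) (q : Fin m → ℤ) (c : ℤ)
    (S : Finset (Fin m)) (hcard : S.card = Λ c + 1)
    (hrun : ∀ k ∈ S, q k = c)
    (hfree : ∀ k : Fin m, (∃ k' ∈ S, k ≤ k') → k ∈ S ∨ 2 ≤ (q k - c).natAbs) :
    K.e q = 0 := by
  classical
  have key : ∀ (n : ℕ) (q : Fin m → ℤ) (S : Finset (Fin m)),
      (∑ k ∈ S, (k : ℕ)) = n → S.card = Λ c + 1 → (∀ k ∈ S, q k = c) →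
      (∀ k : Fin m, (∃ k' ∈ S, k ≤ k') → k ∈ S ∨ 2 ≤ (q k - c).natAbs) →
      K.e q = 0 := by
    intro n
    induction n using Nat.strong_induction_on with
    | _ n ih =>
      intro q S hsum hcard hrun hfree
      by_cases hpc : ∀ s ∈ S, (s : ℕ) = 0 ∨ ∃ t ∈ S, (t : ℕ) + 1 = (s : ℕ)
      · -- `S` is predecessor-closed, hence an initial segment: prefix case
        have hS0 : S.Nonempty := Finset.card_pos.mp (by rw [hcard]; omega)
        have hdown : ∀ j : ℕ, ∀ s : Fin m, s ∈ S → (s : ℕ) = j →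
            ∀ i, i ≤ j → ∃ t ∈ S, (t : ℕ) = i := by
          intro j
          induction j with
          | zero => intro s hs hsv i hi; exact ⟨s, hs, by omega⟩
          | succ j ihj =>
            intro s hs hsv i hi
            rcases Nat.eq_or_lt_of_le hi with h | h
            · exact ⟨s, hs, by omega⟩
            · rcases hpc s hs with h0 | ⟨t, htS, htv⟩
              · omega
              · exact ihj t htS (by omega) i (by omega)
        have hMS : S.max' hS0 ∈ S := S.max'_mem hS0
        have himg : S.image Fin.val = Finset.range ((S.max' hS0 : ℕ) + 1) := by
          ext v
          simp only [Finset.mem_image, Finset.mem_range]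
          constructor
          · rintro ⟨t, htS, rfl⟩
            exact Nat.lt_succ_of_le (Fin.le_def.mp (S.le_max' t htS))
          · intro hv
            exact hdown (S.max' hS0 : ℕ) (S.max' hS0) hMS rfl v (by omega)
        have hcard2 : ((S.max' hS0 : Fin m) : ℕ) = Λ c := by
          have h1 : (S.image Fin.val).card = S.card :=
            Finset.card_image_of_injective _ Fin.val_injective
          rw [himg, Finset.card_range, hcard] at h1
          omega
        have ha : Λ c < m := hcard2 ▸ (S.max' hS0).isLt
        apply prefix_vanish K q c ha
        intro j hj
        obtain ⟨t, htS, htv⟩ :=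
          hdown (S.max' hS0 : ℕ) (S.max' hS0) hMS rfl (j : ℕ) (by omega)
        exact (Fin.ext htv : t = j) ▸ hrun t htS
      · -- there is a bead in `S` whose predecessor slot is free: swap it down
        push_neg at hpc
        obtain ⟨s, hsS, hs0, hnt⟩ := hpc
        have hrm : (s : ℕ) - 1 + 1 < m := by have := s.isLt; omega
        set r : ℕ := (s : ℕ) - 1 with hrdef
        have hr1 : r + 1 = (s : ℕ) := by omega
        set kr : Fin m := ⟨r, Nat.lt_of_succ_lt hrm⟩ with hkr
        set kr1 : Fin m := ⟨r + 1, hrm⟩ with hkr1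
        have hkrval : (kr : ℕ) = r := rfl
        have hkr1s : kr1 = s := Fin.ext hr1
        have hkrS : kr ∉ S := fun h => hnt kr h hr1
        have hfar : 2 ≤ (q kr - c).natAbs := by
          rcases hfree kr ⟨s, hsS, by
            rw [← hkr1s]; exact Fin.le_def.mpr (by omega)⟩ with h | h
          · exact absurd h hkrS
          · exact h
        have hqs : q kr1 = c := by rw [hkr1s]; exact hrun s hsS
        have hne : q kr ≠ q kr1 := by
          rw [hqs]; intro h; rw [h] at hfar; simp at hfar
        have hnadj : ¬ adjZ (q kr) (q kr1) := by
          rw [hqs]; intro h; unfold adjZ at h; omega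
        set q' := swapSeq r q with hq'
        have hq'val : ∀ k, q' k = q (Equiv.swap kr kr1 k) := by
          intro k; rw [hq']; unfold swapSeq; rw [dif_pos hrm]
        have hq'kr : q' kr = q kr1 := by rw [hq'val, Equiv.swap_apply_left]
        have hq'kr1 : q' kr1 = q kr := by rw [hq'val, Equiv.swap_apply_right]
        have hq'other : ∀ k, k ≠ kr → k ≠ kr1 → q' k = q k := by
          intro k h1 h2; rw [hq'val, Equiv.swap_apply_of_ne_of_ne h1 h2]
        set S' : Finset (Fin m) := insert kr (S.erase s) with hS'
        have hkrE : kr ∉ S.erase s := fun h => hkrS (Finset.mem_of_mem_erase h)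
        have hcard' : S'.card = Λ c + 1 := by
          rw [hS', Finset.card_insert_of_notMem hkrE,
            Finset.card_erase_of_mem hsS, hcard]
          omega
        have hrun' : ∀ k ∈ S', q' k = c := by
          intro k hk
          rcases Finset.mem_insert.mp hk with rfl | hk'
          · rw [hq'kr, hqs]
          · have hks : k ≠ s := Finset.ne_of_mem_erase hk'
            have hkkr1 : k ≠ kr1 := fun h => hks (h.trans hkr1s)
            have hkkr : k ≠ kr := fun h => hkrE (h ▸ hk')
            rw [hq'other k hkkr hkkr1]
            exact hrun k (Finset.mem_of_mem_erase hk')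
        have hfree' : ∀ k : Fin m, (∃ k' ∈ S', k ≤ k') →
            k ∈ S' ∨ 2 ≤ (q' k - c).natAbs := by
          intro k hk
          obtain ⟨k', hk'S', hkk'⟩ := hk
          by_cases hk1 : k = kr
          · left; rw [hk1, hS']; exact Finset.mem_insert_self _ _
          by_cases hk2 : k = kr1
          · right; rw [hk2, hq'kr1]; exact hfar
          have hqk : q' k = q k := hq'other k hk1 hk2
          have hex : ∃ j ∈ S, k ≤ j := by
            rcases Finset.mem_insert.mp hk'S' with rfl | hk'E
            · exact ⟨s, hsS, le_trans hkk'
                (by rw [← hkr1s]; exact Fin.le_def.mpr (by omega))⟩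
            · exact ⟨k', Finset.mem_of_mem_erase hk'E, hkk'⟩
          rcases hfree k hex with hkS | hfarr
          · left
            rw [hS']
            exact Finset.mem_insert_of_mem
              (Finset.mem_erase.mpr ⟨fun h => hk2 (h.trans hkr1s.symm), hkS⟩)
          · right; rw [hqk]; exact hfarr
        have hsum' : (∑ k ∈ S', (k : ℕ)) < n := by
          have h1 : (∑ k ∈ S.erase s, (k : ℕ)) + (s : ℕ) = ∑ k ∈ S, (k : ℕ) :=
            Finset.sum_erase_add S _ hsS
          rw [hS', Finset.sum_insert hkrE, hkrval]
          omega
        have hq'0 := ih _ hsum' q' S' rfl hcard' hrun' hfree'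
        have horth := K.δδ_orth r hrm q hne hnadj
        have hedelta := K.e_mul_δ r q
        rw [← hq', hq'0, zero_mul] at hedelta
        calc K.e q = K.δ r (swapSeq r q) * K.δ r q := horth.symm
        _ = K.δ r (swapSeq r q) * 0 := by rw [← hedelta]
        _ = 0 := mul_zero _
  exact key _ q S rfl hcard hrun hfree

end KLRPaper
end
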